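/- arXiv:2512.12197 — 11 statements merged into one kernel-verified Lean document; each statement's English description precedes it below -/
import Mathlib

section
/- The pair (x*, λ*) is a generalized user equilibrium of the coupled system — meaning that (i) x* is an admissible travel pattern which is a user equilibrium given λ*, and (ii) there exist g*, p* ∈ ℝ^{n_P}, γ ∈ ℝ and η ∈ ℝ^{m_P} with η ≥ 0 satisfying the economic-dispatch KKT system p* = g* − d(x*), 1ᵀp* = 0, H·p* ≤ f̄, ηᵀ(f̄ − H·p*) = 0, λ* = Q·g* + μ, and λ* = γ·1 − Hᵀη — if and only if there exist g*, p* ∈ ℝ^{n_P} such that λ* = Q·g* + μ and (x*, g*, p*) is a global minimizer of the joint program: minimize J(x,g,p) := (1/2)gᵀQg + μᵀg + (1/2)xᵀ(A^LR)ᵀdiag(α)(A^LR)x + βᵀ(A^LR)x over the feasible set F(f̄) := {(x,g,p) : p = g − d(x), 1ᵀp = 0, H·p ≤ f̄, 1ᵀx = 1, x ≥ 0}. -/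
open Matrix

/-- Per-route traveler cost in the coupled power–transportation model. -/
noncomputable def routeCost {mT nR nC nP : ℕ}
    (ALR : Matrix (Fin mT) (Fin nR) ℝ) (ACR : Matrix (Fin nC) (Fin nR) ℝ)
    (ACB : Matrix (Fin nC) (Fin nP) ℝ) (α β : Fin mT → ℝ) (ρ : ℝ)
    (x : Fin nR → ℝ) (lam : Fin nP → ℝ) : Fin nR → ℝ :=
  ALRᵀ.mulVec ((Matrix.diagonal α).mulVec (ALR.mulVec x) + β) +
    ρ • (ACRᵀ.mulVec (ACB.mulVec lam))

/-- Charging load induced by the travel pattern `x`: `d(x) = ρ (A^CB)ᵀ A^CR x`. -/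
noncomputable def chargingLoad {nR nC nP : ℕ}
    (ACR : Matrix (Fin nC) (Fin nR) ℝ) (ACB : Matrix (Fin nC) (Fin nP) ℝ)
    (ρ : ℝ) (x : Fin nR → ℝ) : Fin nP → ℝ :=
  ρ • (ACBᵀ.mulVec (ACR.mulVec x))

/-- Objective of the joint program:
`J(x,g,p) = ½ gᵀQg + μᵀg + ½ xᵀ(A^LR)ᵀ diag(α) A^LR x + βᵀ A^LR x`. -/
noncomputable def jointObj {mT nR nP : ℕ}
    (ALR : Matrix (Fin mT) (Fin nR) ℝ) (α β : Fin mT → ℝ)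
    (Q μ : Fin nP → ℝ) (x : Fin nR → ℝ) (g : Fin nP → ℝ) : ℝ :=
  (1 / 2) * (g ⬝ᵥ (Matrix.diagonal Q).mulVec g) + μ ⬝ᵥ g +
    (1 / 2) * (ALR.mulVec x ⬝ᵥ (Matrix.diagonal α).mulVec (ALR.mulVec x)) +
    β ⬝ᵥ ALR.mulVec x

/-- Feasible set `F(f̄)` of the joint program. -/
def jointFeasible {nR nC nP mP : ℕ}
    (ACR : Matrix (Fin nC) (Fin nR) ℝ) (ACB : Matrix (Fin nC) (Fin nP) ℝ)
    (H : Matrix (Fin mP) (Fin nP) ℝ) (ρ : ℝ) (fbar : Fin mP → ℝ)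
    (x : Fin nR → ℝ) (g p : Fin nP → ℝ) : Prop :=
  p = g - chargingLoad ACR ACB ρ x ∧ (∑ i, p i) = 0 ∧
    (∀ ℓ, H.mulVec p ℓ ≤ fbar ℓ) ∧ (∑ r, x r) = 1 ∧ ∀ r, 0 ≤ x r

/-!
Eliminating `g = p + d(x)`, the feasible set `F(f̄)` becomes the product of the simplex of travel
patterns and the dispatch polyhedron `{p | 1ᵀp = 0, H p ≤ f̄}`. Along a feasible segment the convex
quadratic `J` has slope `λᵀΔp + c(x, λ)ᵀΔx` with `λ = Q g + μ` (the charging term of `c` is the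
chain rule through `d(x)`) plus a nonnegative second-order term. Hence `(x*, g*, p*)` is a global
minimizer iff this slope is nonnegative in every feasible direction, and by the product structure
this splits into two linear programs: `x*` minimizes `c(x*, λ*)ᵀx` over the simplex, which is the
Wardrop (user equilibrium) condition, and `p*` minimizes `λ*ᵀp` over the dispatch polyhedron, which
by LP duality is the KKT system. The duality is Farkas' lemma, obtained by separating a point from a
finitely generated cone; such a cone is closed by the conic Carathéodory theorem.
-/

open Finset Filter Topology

section ConicCaratheodory

variable {ι E : Type*} [Fintype ι]

lemma exists_nonneg_sub_smul_eq_zero {y z : ι → ℝ} (hy : 0 ≤ y) (hz : ∃ i, 0 < z i) :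
    ∃ τ : ℝ, 0 ≤ y - τ • z ∧ ∃ i, 0 < z i ∧ y i - τ * z i = 0 := by
  classical
  obtain ⟨i, hi, hmin⟩ := (univ.filter (0 < z ·)).exists_min_image (fun i => y i / z i)
    (by simpa [Finset.Nonempty] using hz)
  have hzi : 0 < z i := (mem_filter.mp hi).2
  refine ⟨y i / z i, fun j => ?_, i, hzi, by field_simp; ring⟩
  simp only [Pi.zero_apply, Pi.sub_apply, Pi.smul_apply, smul_eq_mul, sub_nonneg]
  rcases le_or_gt (z j) 0 with hzj | hzj
  · exact (mul_nonpos_of_nonneg_of_nonpos (div_nonneg (hy i) hzi.le) hzj).trans (hy j)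
  · have := hmin j (mem_filter.mpr ⟨mem_univ j, hzj⟩)
    rw [div_le_div_iff₀ hzi hzj] at this
    rw [div_mul_eq_mul_div, div_le_iff₀ hzi]
    linarith

variable [AddCommGroup E] [Module ℝ E]

lemma exists_nonneg_map_eq_injOn_support (f : (ι → ℝ) →ₗ[ℝ] E) {y : ι → ℝ} (hy : 0 ≤ y) :
    ∃ y', 0 ≤ y' ∧ f y' = f y ∧ ∀ z, (∀ i, y' i = 0 → z i = 0) → f z = 0 → z = 0 := by
  classical
  induction hn : (univ.filter (y · ≠ 0)).card using Nat.strong_induction_on generalizing y with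
  | _ n ih =>
  by_cases hinj : ∀ z, (∀ i, y i = 0 → z i = 0) → f z = 0 → z = 0
  · exact ⟨y, hy, rfl, hinj⟩
  push Not at hinj
  obtain ⟨z, hsupp, hfz, hz⟩ := hinj
  obtain ⟨z, hsupp, hfz, hpos⟩ :
      ∃ z : ι → ℝ, (∀ i, y i = 0 → z i = 0) ∧ f z = 0 ∧ ∃ i, 0 < z i := by
    obtain ⟨i, hi⟩ := Function.ne_iff.mp hz
    rcases lt_or_gt_of_ne hi with h | h
    · exact ⟨-z, fun j hj => by simp [hsupp j hj], by simp [hfz], i, by simpa using h⟩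
    · exact ⟨z, hsupp, hfz, i, h⟩
  obtain ⟨τ, hnn, i, hzi, hyi⟩ := exists_nonneg_sub_smul_eq_zero hy hpos
  have hlt : (univ.filter ((y - τ • z) · ≠ 0)).card < n := by
    rw [← hn]
    refine card_lt_card ⟨fun j => ?_, fun h => ?_⟩
    · simp only [mem_filter, mem_univ, true_and]
      intro hj hyj
      simp [hyj, hsupp j hyj] at hj
    · have := h (mem_filter.mpr ⟨mem_univ i, fun hyi0 => hzi.ne' (hsupp i hyi0)⟩)
      simp [hyi] at this
  obtain ⟨y', hy', hfy', hker⟩ := ih _ hlt hnn rfl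
  exact ⟨y', hy', by rw [hfy', map_sub, map_smul, hfz, smul_zero, sub_zero], hker⟩

/-- The image is the finite union, over supports `s` on which `f` is injective, of images of
closed orthants under closed embeddings. -/
lemma isClosed_image_nonneg [TopologicalSpace E] [IsTopologicalAddGroup E] [ContinuousSMul ℝ E]
    [T2Space E] (f : (ι → ℝ) →ₗ[ℝ] E) : IsClosed (f '' {y | 0 ≤ y}) := by
  classical
  let W (s : Finset ι) : Submodule ℝ (ι → ℝ) := Submodule.pi {i | i ∉ s} fun _ => ⊥
  have hW (s : Finset ι) (y : ι → ℝ) : y ∈ W s ↔ ∀ i, y i ≠ 0 → i ∈ s := by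
    simp only [W, Submodule.mem_pi, Set.mem_ofPred_eq, Submodule.mem_bot]
    exact forall_congr' fun i => not_imp_comm
  have hunion : f '' {y | 0 ≤ y} = ⋃ s ∈ {s | LinearMap.ker (f ∘ₗ (W s).subtype) = ⊥},
      (f ∘ₗ (W s).subtype) '' {y | 0 ≤ (y : ι → ℝ)} := by
    ext x
    simp only [Set.mem_image, Set.mem_iUnion, Set.mem_ofPred_eq, exists_prop]
    constructor
    · rintro ⟨y, hy, rfl⟩
      obtain ⟨y', hy', hfy', hinj⟩ := exists_nonneg_map_eq_injOn_support f hy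
      refine ⟨univ.filter (y' · ≠ 0), ?_, ⟨y', (hW _ _).2 fun i hi => by simpa using hi⟩,
        hy', hfy'⟩
      rw [LinearMap.ker_eq_bot']
      rintro ⟨z, hz⟩ hfz
      refine Subtype.ext <| hinj z (fun i hi => by_contra fun hzi => ?_) hfz
      simpa [hi] using (hW _ _).1 hz i hzi
    · rintro ⟨s, -, y, hy, rfl⟩
      exact ⟨y, hy, rfl⟩
  rw [hunion]
  refine (Set.toFinite _).isClosed_biUnion fun s hs => ?_
  exact (LinearMap.isClosedEmbedding_of_injective hs).isClosedMap _
    (isClosed_le continuous_const continuous_subtype_val)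

end ConicCaratheodory

theorem Matrix.exists_nonneg_vecMul_eq {m n : Type*} [Fintype m] [Fintype n]
    (A : Matrix m n ℝ) (b : n → ℝ) (h : ∀ v, A *ᵥ v ≤ 0 → b ⬝ᵥ v ≤ 0) :
    ∃ y, 0 ≤ y ∧ y ᵥ* A = b := by
  classical
  let C : ProperCone ℝ (n → ℝ) :=
    ⟨(PointedCone.positive ℝ (m → ℝ)).map A.vecMulLinear, isClosed_image_nonneg A.vecMulLinear⟩
  by_contra hb
  obtain ⟨f, hfC, hfb⟩ := C.hyperplane_separation_point (x₀ := b) fun hbC => hb <| by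
    obtain ⟨y, hy, hyb⟩ := PointedCone.mem_map.1 hbC
    exact ⟨y, hy, hyb⟩
  let v : n → ℝ := fun j => f (Pi.single j 1)
  have hf (x : n → ℝ) : f x = x ⬝ᵥ v := by
    rw [← ContinuousLinearMap.coe_coe, LinearMap.pi_apply_eq_sum_univ]
    simp only [dotProduct, smul_eq_mul, v]
    congr! with j - k
    simp [Pi.single_apply, @eq_comm _ k]
  have hAv : A *ᵥ -v ≤ 0 := fun i => by
    have : A i ∈ C := PointedCone.mem_map.2
      ⟨Pi.single i 1, by simp [Pi.single_nonneg], (single_vecMul A i 1).trans (one_smul ℝ _)⟩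
    simpa [mulVec, hf] using hfC _ this
  have := h _ hAv
  rw [dotProduct_neg, ← hf] at this
  linarith

theorem Matrix.exists_nonneg_vecMul_add_smul_eq {m n : Type*} [Fintype m] [Fintype n]
    (A : Matrix m n ℝ) (c b : n → ℝ) (h : ∀ v, A *ᵥ v ≤ 0 → c ⬝ᵥ v = 0 → b ⬝ᵥ v ≤ 0) :
    ∃ (y : m → ℝ) (γ : ℝ), 0 ≤ y ∧ y ᵥ* A + γ • c = b := by
  obtain ⟨y, hy, hyb⟩ := (fromRows A (of ![c, -c])).exists_nonneg_vecMul_eq b fun v hv => by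
    have hA : A *ᵥ v ≤ 0 := fun i => hv (Sum.inl i)
    have hc₁ : c ⬝ᵥ v ≤ 0 := hv (Sum.inr 0)
    have hc₂ : -c ⬝ᵥ v ≤ 0 := hv (Sum.inr 1)
    exact h v hA (le_antisymm hc₁ (by simpa using hc₂))
  refine ⟨y ∘ Sum.inl, y (Sum.inr 0) - y (Sum.inr 1), fun i => hy _, ?_⟩
  rw [← hyb, vecMul_fromRows, vecMul_eq_sum (y ∘ Sum.inr), Fin.sum_univ_two]
  change _ = _ + (y (Sum.inr 0) • c + y (Sum.inr 1) • -c)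
  module

lemma nonneg_of_forall_mul_add_sq_mul_nonneg {b c : ℝ}
    (h : ∀ t ∈ Set.Ioc (0 : ℝ) 1, 0 ≤ t * b + t ^ 2 * c) : 0 ≤ b := by
  have hlim : Tendsto (fun t => b + t * c) (𝓝[>] 0) (𝓝 b) := by
    simpa using ((show Continuous fun t : ℝ => b + t * c by fun_prop).tendsto 0).mono_left
      nhdsWithin_le_nhds
  refine ge_of_tendsto hlim ?_
  filter_upwards [Ioo_mem_nhdsGT zero_lt_one] with t ht
  have := h t ⟨ht.1, ht.2.le⟩
  rw [show t * b + t ^ 2 * c = t * (b + t * c) by ring] at this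
  exact nonneg_of_mul_nonneg_right this ht.1

theorem isMinOn_dotProduct_stdSimplex_iff {ι : Type*} [Fintype ι] {c x : ι → ℝ}
    (hx : x ∈ stdSimplex ℝ ι) :
    IsMinOn (c ⬝ᵥ ·) (stdSimplex ℝ ι) x ↔ ∀ r r', 0 < x r → c r ≤ c r' := by
  classical
  constructor
  · intro hmin r r' hr
    -- shift all the mass of `r` onto `r'`
    have hmem : x + x r • (Pi.single r' 1 - Pi.single r 1) ∈ stdSimplex ℝ ι := by
      have hs (j : ι) : (0 : ℝ) ≤ (Pi.single r' 1 : ι → ℝ) j := by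
        rw [Pi.single_apply]; split_ifs <;> norm_num
      refine ⟨fun j => ?_, by simp [Finset.sum_add_distrib, ← Finset.mul_sum, hx.2]⟩
      rcases eq_or_ne j r with rfl | hj
      · simp only [Pi.add_apply, Pi.smul_apply, Pi.sub_apply, Pi.single_eq_same, smul_eq_mul]
        nlinarith [mul_nonneg hr.le (hs j)]
      · simp only [Pi.add_apply, Pi.smul_apply, Pi.sub_apply, Pi.single_eq_of_ne hj,
          smul_eq_mul, sub_zero]
        exact add_nonneg (hx.1 j) (mul_nonneg hr.le (hs j))
    have := hmin hmem
    simp only [Set.mem_ofPred_eq, dotProduct_add, dotProduct_smul, dotProduct_sub,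
      dotProduct_single, mul_one, smul_eq_mul, le_add_iff_nonneg_right] at this
    nlinarith
  · intro hUE x' hx'
    obtain ⟨r₀, hr₀⟩ : ∃ r, 0 < x r := by
      by_contra! h
      have : ∑ r, x r = 0 := Finset.sum_eq_zero fun r _ => le_antisymm (h r) (hx.1 r)
      simp [hx.2] at this
    calc c ⬝ᵥ x = ∑ r, c r₀ * x r := Finset.sum_congr rfl fun r _ => by
          rcases (hx.1 r).eq_or_lt with h | h
          · simp [← h]
          · rw [le_antisymm (hUE r r₀ h) (hUE r₀ r hr₀)]
      _ = ∑ r, c r₀ * x' r := by rw [← Finset.mul_sum, ← Finset.mul_sum, hx.2, hx'.2]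
      _ ≤ c ⬝ᵥ x' := Finset.sum_le_sum fun r _ =>
          mul_le_mul_of_nonneg_right (hUE r₀ r hr₀) (hx'.1 r)

def dispatchSet {m n : Type*} [Fintype n] (H : Matrix m n ℝ) (fbar : m → ℝ) : Set (n → ℝ) :=
  {p | ∑ i, p i = 0 ∧ ∀ ℓ, (H *ᵥ p) ℓ ≤ fbar ℓ}

lemma convex_dispatchSet {m n : Type*} [Fintype n] (H : Matrix m n ℝ) (fbar : m → ℝ) :
    Convex ℝ (dispatchSet H fbar) := by
  rintro p ⟨hp, hHp⟩ q ⟨hq, hHq⟩ a b ha hb hab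
  refine ⟨by simp [Finset.sum_add_distrib, ← Finset.mul_sum, hp, hq], fun ℓ => ?_⟩
  simp only [mulVec_add, mulVec_smul, Pi.add_apply, Pi.smul_apply, smul_eq_mul]
  have : fbar ℓ = a * fbar ℓ + b * fbar ℓ := by rw [← add_mul, hab, one_mul]
  nlinarith [mul_le_mul_of_nonneg_left (hHp ℓ) ha, mul_le_mul_of_nonneg_left (hHq ℓ) hb]

section Dispatch

variable {m n : Type*} [Fintype m] [Fintype n] {H : Matrix m n ℝ} {fbar : m → ℝ}
  {lam p : n → ℝ}

lemma eventually_add_smul_mem_dispatchSet (hp : p ∈ dispatchSet H fbar) {v : n → ℝ}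
    (hv : ∑ i, v i = 0) (hact : ∀ ℓ, (H *ᵥ p) ℓ = fbar ℓ → (H *ᵥ v) ℓ ≤ 0) :
    ∀ᶠ ε in 𝓝[>] (0 : ℝ), p + ε • v ∈ dispatchSet H fbar := by
  have hsum (ε : ℝ) : ∑ i, (p + ε • v) i = 0 := by
    simp [Finset.sum_add_distrib, ← Finset.mul_sum, hp.1, hv]
  have hH (ε : ℝ) (ℓ : m) : (H *ᵥ (p + ε • v)) ℓ = (H *ᵥ p) ℓ + ε * (H *ᵥ v) ℓ := by
    simp [mulVec_add, mulVec_smul]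
  simp only [dispatchSet, Set.mem_ofPred_eq, hsum, true_and, hH]
  refine eventually_all.2 fun ℓ => ?_
  rcases (hp.2 ℓ).eq_or_lt with hℓ | hℓ
  · exact eventually_nhdsWithin_of_forall fun ε (hε : 0 < ε) => by nlinarith [hact ℓ hℓ]
  · have : ∀ᶠ ε in 𝓝 (0 : ℝ), (H *ᵥ p) ℓ + ε * (H *ᵥ v) ℓ < fbar ℓ :=
      ContinuousAt.eventually_lt (by fun_prop) continuousAt_const (by simpa using hℓ)
    exact nhdsWithin_le_nhds (this.mono fun ε hε => hε.le)

lemma dotProduct_nonneg_of_isMinOn_dispatchSet (hp : p ∈ dispatchSet H fbar)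
    (hmin : IsMinOn (lam ⬝ᵥ ·) (dispatchSet H fbar) p) {v : n → ℝ} (hv : ∑ i, v i = 0)
    (hact : ∀ ℓ, (H *ᵥ p) ℓ = fbar ℓ → (H *ᵥ v) ℓ ≤ 0) : 0 ≤ lam ⬝ᵥ v := by
  obtain ⟨ε, hε, hεpos⟩ :=
    ((eventually_add_smul_mem_dispatchSet hp hv hact).and self_mem_nhdsWithin).exists
  have := hmin hε
  simp only [Set.mem_ofPred_eq, dotProduct_add, dotProduct_smul, smul_eq_mul,
    le_add_iff_nonneg_right] at this
  exact nonneg_of_mul_nonneg_right this hεpos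

theorem isMinOn_dispatchSet_iff (hp : p ∈ dispatchSet H fbar) :
    IsMinOn (lam ⬝ᵥ ·) (dispatchSet H fbar) p ↔
      ∃ (γ : ℝ) (η : m → ℝ), (∀ ℓ, 0 ≤ η ℓ) ∧ η ⬝ᵥ (fbar - H *ᵥ p) = 0 ∧
        lam = γ • 1 - Hᵀ *ᵥ η := by
  classical
  constructor
  · intro hmin
    -- Farkas on the active rows only; masking the others also gives complementary slackness.
    set act : m → ℝ := fun ℓ => if (H *ᵥ p) ℓ = fbar ℓ then 1 else 0
    obtain ⟨y, γ, hy, hyl⟩ := (diagonal act * H).exists_nonneg_vecMul_add_smul_eq 1 (-lam)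
      fun v hv hv1 => by
        have := dotProduct_nonneg_of_isMinOn_dispatchSet hp hmin (by rwa [← one_dotProduct])
          fun ℓ hℓ => by simpa [act, hℓ, ← mulVec_mulVec, mulVec_diagonal] using hv ℓ
        simpa using this
    refine ⟨-γ, y ᵥ* diagonal act, fun ℓ => ?_, ?_, ?_⟩
    · rw [vecMul_diagonal]
      exact mul_nonneg (hy ℓ) (by simp only [act]; split_ifs <;> norm_num)
    · refine Finset.sum_eq_zero fun ℓ _ => ?_
      by_cases hℓ : (H *ᵥ p) ℓ = fbar ℓ <;> simp [vecMul_diagonal, act, hℓ]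
    · rw [mulVec_transpose, vecMul_vecMul, ← neg_neg lam, ← hyl]
      module
  · rintro ⟨γ, η, hη, hcomp, rfl⟩ p' hp'
    have hval (q : n → ℝ) : (γ • 1 - Hᵀ *ᵥ η) ⬝ᵥ q = γ * ∑ i, q i - η ⬝ᵥ (H *ᵥ q) := by
      rw [sub_dotProduct, smul_dotProduct, one_dotProduct, mulVec_transpose, dotProduct_mulVec,
        smul_eq_mul]
    have hHp' : η ⬝ᵥ (H *ᵥ p') ≤ η ⬝ᵥ fbar := dotProduct_le_dotProduct_of_nonneg_left hp'.2 hη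
    rw [dotProduct_sub] at hcomp
    simp only [Set.mem_ofPred_eq, hval, hp.1, hp'.1]
    linarith

end Dispatch

section DiagonalQuadratic

variable {ι : Type*} [Fintype ι] [DecidableEq ι]

lemma dotProduct_diagonal_mulVec_self_nonneg {q : ι → ℝ} (hq : ∀ i, 0 ≤ q i) (b : ι → ℝ) :
    0 ≤ b ⬝ᵥ diagonal q *ᵥ b :=
  Finset.sum_nonneg fun i _ => by
    rw [mulVec_diagonal]
    nlinarith [hq i, mul_self_nonneg (b i)]

lemma half_dotProduct_diagonal_add_smul (q c a b : ι → ℝ) (t : ℝ) :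
    1 / 2 * ((a + t • b) ⬝ᵥ diagonal q *ᵥ (a + t • b)) + c ⬝ᵥ (a + t • b) =
      1 / 2 * (a ⬝ᵥ diagonal q *ᵥ a) + c ⬝ᵥ a + t * ((diagonal q *ᵥ a + c) ⬝ᵥ b) +
        t ^ 2 * (1 / 2 * (b ⬝ᵥ diagonal q *ᵥ b)) := by
  simp only [dotProduct, mulVec_diagonal, Pi.add_apply, Pi.smul_apply, smul_eq_mul,
    Finset.mul_sum, ← Finset.sum_add_distrib]
  exact Finset.sum_congr rfl fun i _ => by ring

end DiagonalQuadratic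

section JointProgram

variable {mT nR nC nP mP : ℕ} {ALR : Matrix (Fin mT) (Fin nR) ℝ}
  {ACR : Matrix (Fin nC) (Fin nR) ℝ} {ACB : Matrix (Fin nC) (Fin nP) ℝ}
  {H : Matrix (Fin mP) (Fin nP) ℝ} {fbar : Fin mP → ℝ} {Q μ : Fin nP → ℝ} {α β : Fin mT → ℝ}
  {ρ : ℝ}

lemma chargingLoad_add_smul (x u : Fin nR → ℝ) (t : ℝ) :
    chargingLoad ACR ACB ρ (x + t • u) =
      chargingLoad ACR ACB ρ x + t • chargingLoad ACR ACB ρ u := by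
  simp only [chargingLoad, mulVec_add, mulVec_smul, smul_add, smul_comm ρ t]

lemma chargingLoad_sub (x y : Fin nR → ℝ) :
    chargingLoad ACR ACB ρ (x - y) = chargingLoad ACR ACB ρ x - chargingLoad ACR ACB ρ y := by
  simp only [chargingLoad, mulVec_sub, smul_sub]

lemma dotProduct_chargingLoad (lam : Fin nP → ℝ) (u : Fin nR → ℝ) :
    lam ⬝ᵥ chargingLoad ACR ACB ρ u = (ρ • ACRᵀ *ᵥ (ACB *ᵥ lam)) ⬝ᵥ u := by
  rw [chargingLoad, dotProduct_smul, smul_dotProduct, mulVec_transpose, mulVec_transpose,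
    ← dotProduct_mulVec, dotProduct_comm, ← dotProduct_mulVec, dotProduct_comm]

lemma jointObj_zero_zero_nonneg (hQ : ∀ i, 0 ≤ Q i) (hα : ∀ i, 0 ≤ α i) (u : Fin nR → ℝ)
    (v : Fin nP → ℝ) : 0 ≤ jointObj ALR α 0 Q 0 u v := by
  have := dotProduct_diagonal_mulVec_self_nonneg hQ v
  have := dotProduct_diagonal_mulVec_self_nonneg hα (ALR *ᵥ u)
  simp only [jointObj, zero_dotProduct, add_zero]
  positivity

lemma jointObj_add_smul (x u : Fin nR → ℝ) (g v : Fin nP → ℝ) (t : ℝ) :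
    jointObj ALR α β Q μ (x + t • u) (g + t • v) = jointObj ALR α β Q μ x g +
      t * ((diagonal Q *ᵥ g + μ) ⬝ᵥ v + (ALRᵀ *ᵥ (diagonal α *ᵥ (ALR *ᵥ x) + β)) ⬝ᵥ u) +
        t ^ 2 * jointObj ALR α 0 Q 0 u v := by
  have hg := half_dotProduct_diagonal_add_smul Q μ g v t
  have hx := half_dotProduct_diagonal_add_smul α β (ALR *ᵥ x) (ALR *ᵥ u) t
  rw [mulVec_transpose, ← dotProduct_mulVec]
  simp only [jointObj, mulVec_add, mulVec_smul, zero_dotProduct, add_zero] at hg hx ⊢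
  linarith

lemma jointObj_add_smul_add_chargingLoad (x u : Fin nR → ℝ) (g w : Fin nP → ℝ) (t : ℝ)
    {lam : Fin nP → ℝ} (hlam : lam = diagonal Q *ᵥ g + μ) :
    jointObj ALR α β Q μ (x + t • u) (g + t • (w + chargingLoad ACR ACB ρ u)) =
      jointObj ALR α β Q μ x g + t * (lam ⬝ᵥ w + routeCost ALR ACR ACB α β ρ x lam ⬝ᵥ u) +
        t ^ 2 * jointObj ALR α 0 Q 0 u (w + chargingLoad ACR ACB ρ u) := by
  rw [jointObj_add_smul, ← hlam, dotProduct_add, dotProduct_chargingLoad, routeCost,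
    add_dotProduct]
  ring

lemma jointFeasible_iff {x : Fin nR → ℝ} {g p : Fin nP → ℝ} :
    jointFeasible ACR ACB H ρ fbar x g p ↔
      p = g - chargingLoad ACR ACB ρ x ∧ p ∈ dispatchSet H fbar ∧
        x ∈ stdSimplex ℝ (Fin nR) := by
  simp only [jointFeasible, dispatchSet, stdSimplex, Set.mem_ofPred_eq]
  tauto

lemma jointFeasible_add_smul {x x' : Fin nR → ℝ} {g p p' : Fin nP → ℝ}
    (h : jointFeasible ACR ACB H ρ fbar x g p) (hx' : x' ∈ stdSimplex ℝ (Fin nR))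
    (hp' : p' ∈ dispatchSet H fbar) {t : ℝ} (ht : t ∈ Set.Icc (0 : ℝ) 1) :
    jointFeasible ACR ACB H ρ fbar (x + t • (x' - x))
      (g + t • ((p' - p) + chargingLoad ACR ACB ρ (x' - x))) (p + t • (p' - p)) := by
  obtain ⟨hp, hpD, hxS⟩ := jointFeasible_iff.1 h
  refine jointFeasible_iff.2 ⟨?_, (convex_dispatchSet H fbar).add_smul_sub_mem hpD hp' ht,
    (convex_stdSimplex ℝ (Fin nR)).add_smul_sub_mem hxS hx' ht⟩
  rw [chargingLoad_add_smul, hp]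
  module

theorem forall_jointObj_le_iff (hQ : ∀ i, 0 ≤ Q i) (hα : ∀ i, 0 ≤ α i) {x : Fin nR → ℝ}
    {g p lam : Fin nP → ℝ} (hfeas : jointFeasible ACR ACB H ρ fbar x g p)
    (hlam : lam = diagonal Q *ᵥ g + μ) :
    (∀ x' g' p', jointFeasible ACR ACB H ρ fbar x' g' p' →
        jointObj ALR α β Q μ x g ≤ jointObj ALR α β Q μ x' g') ↔
      IsMinOn (routeCost ALR ACR ACB α β ρ x lam ⬝ᵥ ·) (stdSimplex ℝ (Fin nR)) x ∧
        IsMinOn (lam ⬝ᵥ ·) (dispatchSet H fbar) p := by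
  obtain ⟨hp, hpD, hxS⟩ := jointFeasible_iff.1 hfeas
  constructor
  · intro hmin
    have hslope : ∀ x' ∈ stdSimplex ℝ (Fin nR), ∀ p' ∈ dispatchSet H fbar,
        0 ≤ lam ⬝ᵥ (p' - p) + routeCost ALR ACR ACB α β ρ x lam ⬝ᵥ (x' - x) :=
      fun x' hx' p' hp' => nonneg_of_forall_mul_add_sq_mul_nonneg fun t ht => by
        have := hmin _ _ _ (jointFeasible_add_smul hfeas hx' hp' (Set.Ioc_subset_Icc_self ht))
        rw [jointObj_add_smul_add_chargingLoad _ _ _ _ _ hlam] at this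
        linarith
    refine ⟨isMinOn_iff.2 fun x' hx' => ?_, isMinOn_iff.2 fun p' hp' => ?_⟩
    · simpa [dotProduct_sub] using hslope x' hx' p hpD
    · simpa [dotProduct_sub] using hslope x hxS p' hp'
  · rintro ⟨hc, hl⟩ x' g' p' h'
    obtain ⟨hp', hpD', hxS'⟩ := jointFeasible_iff.1 h'
    have hJ := jointObj_add_smul_add_chargingLoad (ALR := ALR) (ACR := ACR) (ACB := ACB)
      (α := α) (β := β) (ρ := ρ) x (x' - x) g (p' - p) 1 hlam
    have hg' : g + (1 : ℝ) • ((p' - p) + chargingLoad ACR ACB ρ (x' - x)) = g' := by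
      rw [chargingLoad_sub, hp, hp']
      module
    rw [hg', one_smul, add_sub_cancel] at hJ
    have := isMinOn_iff.1 hc x' hxS'
    have := isMinOn_iff.1 hl p' hpD'
    have := jointObj_zero_zero_nonneg (ALR := ALR) hQ hα (x' - x)
      ((p' - p) + chargingLoad ACR ACB ρ (x' - x))
    simp only [dotProduct_sub] at hJ
    nlinarith

end JointProgram

theorem GUE_iff_joint_min_general {mT nR nC nP mP : ℕ}
    (ALR : Matrix (Fin mT) (Fin nR) ℝ) (ACR : Matrix (Fin nC) (Fin nR) ℝ)
    (ACB : Matrix (Fin nC) (Fin nP) ℝ) (H : Matrix (Fin mP) (Fin nP) ℝ)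
    (fbar : Fin mP → ℝ) (Q : Fin nP → ℝ) (hQ : ∀ i, 0 < Q i) (μ : Fin nP → ℝ)
    (α β : Fin mT → ℝ) (hα : ∀ i, 0 ≤ α i)
    (ρ : ℝ)
    (xs : Fin nR → ℝ) (lams : Fin nP → ℝ) :
    (((∀ r, 0 ≤ xs r) ∧ (∑ r, xs r) = 1 ∧
        (∀ r r', 0 < xs r →
          routeCost ALR ACR ACB α β ρ xs lams r ≤ routeCost ALR ACR ACB α β ρ xs lams r')) ∧
      (∃ (g p : Fin nP → ℝ) (γ : ℝ) (η : Fin mP → ℝ),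
        (∀ ℓ, 0 ≤ η ℓ) ∧
        p = g - chargingLoad ACR ACB ρ xs ∧
        (∑ i, p i) = 0 ∧
        (∀ ℓ, H.mulVec p ℓ ≤ fbar ℓ) ∧
        η ⬝ᵥ (fbar - H.mulVec p) = 0 ∧
        lams = (Matrix.diagonal Q).mulVec g + μ ∧
        lams = γ • (1 : Fin nP → ℝ) - Hᵀ.mulVec η)) ↔
    (∃ g p : Fin nP → ℝ,
      lams = (Matrix.diagonal Q).mulVec g + μ ∧
      jointFeasible ACR ACB H ρ fbar xs g p ∧
      ∀ x' g' p', jointFeasible ACR ACB H ρ fbar x' g' p' →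
        jointObj ALR α β Q μ xs g ≤ jointObj ALR α β Q μ x' g') := by
  have hQ : ∀ i, 0 ≤ Q i := fun i => (hQ i).le
  constructor
  · rintro ⟨⟨hx0, hx1, hUE⟩, g, p, γ, η, hη, hp, hp0, hHp, hcomp, hlam, hlam'⟩
    have hfeas : jointFeasible ACR ACB H ρ fbar xs g p := ⟨hp, hp0, hHp, hx1, hx0⟩
    refine ⟨g, p, hlam, hfeas, (forall_jointObj_le_iff hQ hα hfeas hlam).2 ⟨?_, ?_⟩⟩
    · exact (isMinOn_dotProduct_stdSimplex_iff ⟨hx0, hx1⟩).2 hUE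
    · exact (isMinOn_dispatchSet_iff ⟨hp0, hHp⟩).2 ⟨γ, η, hη, hcomp, hlam'⟩
  · rintro ⟨g, p, hlam, hfeas, hmin⟩
    obtain ⟨hUE, hED⟩ := (forall_jointObj_le_iff hQ hα hfeas hlam).1 hmin
    obtain ⟨hp, hp0, hHp, hx1, hx0⟩ := hfeas
    obtain ⟨γ, η, hη, hcomp, hlam'⟩ := (isMinOn_dispatchSet_iff ⟨hp0, hHp⟩).1 hED
    exact ⟨⟨hx0, hx1, (isMinOn_dotProduct_stdSimplex_iff ⟨hx0, hx1⟩).1 hUE⟩,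
      g, p, γ, η, hη, hp, hp0, hHp, hcomp, hlam, hlam'⟩

/-- `(x*, λ*)` is a generalized user equilibrium (UE given `λ*` plus economic-dispatch KKT)
iff `λ* = Q g* + μ` for some global minimizer `(x*, g*, p*)` of the joint convex program. -/
theorem GUE_iff_joint_min {mT nR nC nP mP : ℕ}
    (ALR : Matrix (Fin mT) (Fin nR) ℝ) (ACR : Matrix (Fin nC) (Fin nR) ℝ)
    (ACB : Matrix (Fin nC) (Fin nP) ℝ) (H : Matrix (Fin mP) (Fin nP) ℝ)
    (hALR : ∀ i j, ALR i j = 0 ∨ ALR i j = 1)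
    (hACR : ∀ i j, ACR i j = 0 ∨ ACR i j = 1)
    (hACB : ∀ i j, ACB i j = 0 ∨ ACB i j = 1)
    (fbar : Fin mP → ℝ) (Q : Fin nP → ℝ) (hQ : ∀ i, 0 < Q i) (μ : Fin nP → ℝ)
    (α β : Fin mT → ℝ) (hα : ∀ i, 0 ≤ α i)
    (ρ : ℝ) (hρ : 0 < ρ)
    (xs : Fin nR → ℝ) (lams : Fin nP → ℝ) :
    (((∀ r, 0 ≤ xs r) ∧ (∑ r, xs r) = 1 ∧
        (∀ r r', 0 < xs r →
          routeCost ALR ACR ACB α β ρ xs lams r ≤ routeCost ALR ACR ACB α β ρ xs lams r')) ∧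
      (∃ (g p : Fin nP → ℝ) (γ : ℝ) (η : Fin mP → ℝ),
        (∀ ℓ, 0 ≤ η ℓ) ∧
        p = g - chargingLoad ACR ACB ρ xs ∧
        (∑ i, p i) = 0 ∧
        (∀ ℓ, H.mulVec p ℓ ≤ fbar ℓ) ∧
        η ⬝ᵥ (fbar - H.mulVec p) = 0 ∧
        lams = (Matrix.diagonal Q).mulVec g + μ ∧
        lams = γ • (1 : Fin nP → ℝ) - Hᵀ.mulVec η)) ↔
    (∃ g p : Fin nP → ℝ,
      lams = (Matrix.diagonal Q).mulVec g + μ ∧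
      jointFeasible ACR ACB H ρ fbar xs g p ∧
      ∀ x' g' p', jointFeasible ACR ACB H ρ fbar x' g' p' →
        jointObj ALR α β Q μ xs g ≤ jointObj ALR α β Q μ x' g') :=
  GUE_iff_joint_min_general ALR ACR ACB H fbar Q hQ μ α β hα ρ xs lams
end

section
/- (2-Route 2-Bus system, uncongested case.) Let α₁ > α₂ > 0 and ρ > 0. Suppose x₁, x₂, f, g₁, g₂, λ₁, λ₂ ∈ ℝ satisfy x₁ + x₂ = 1, x₁ ≥ 0, x₂ ≥ 0, g₁ = ρx₁ + f, g₂ = ρx₂ − f, λ₁ = g₁, λ₂ = g₂, λ₁ = λ₂ (equal locational marginal prices, since the line is uncongested), and the user-equilibrium condition α₁x₁ + ρλ₁ = α₂x₂ + ρλ₂. Then x₁ = α₂/(α₁+α₂), x₂ = α₁/(α₁+α₂), g₁ = g₂ = ρ/2, and f = ρ(α₁−α₂)/(2(α₁+α₂)). Consequently the power system social cost Φ_P := (1/2)(g₁² + g₂²) = ρ²/4 does not depend on (α₁, α₂) or on the line capacity f̄, and the transportation social cost Φ_T := α₁x₁² + α₂x₂² = α₁α₂/(α₁+α₂) does not depend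 on f̄ and has strictly positive partial derivatives ∂Φ_T/∂α₁ = α₂²/(α₁+α₂)² > 0 and ∂Φ_T/∂α₂ = α₁²/(α₁+α₂)² > 0 on {(α₁,α₂) : α₁, α₂ > 0}; hence no generalized Braess' paradox occurs for the 2-Route 2-Bus coupled system when the power network is uncongested. -/
/-!
With equal locational marginal prices the price terms cancel from the user-equilibrium
condition, leaving `α₁ x₁ = α₂ x₂`; together with `x₁ + x₂ = 1` this fixes the traffic split,
and `g₁ = g₂` splits the total demand `ρ` evenly between the generators. Substituting the
equilibrium gives `Φ_T = α₁ α₂ / (α₁ + α₂)`, whose partial derivatives are read off from this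
closed form, valid on the open set `α₁ + α₂ ≠ 0`.
-/

section Equilibrium

variable {K : Type*} [Field K]

theorem flows_eq_of_mul_eq_mul {a b x y : K} (hab : a + b ≠ 0) (hsum : x + y = 1)
    (hbal : a * x = b * y) : x = b / (a + b) ∧ y = a / (a + b) := by
  constructor <;> field_simp
  · linear_combination hbal + b * hsum
  · linear_combination -hbal + a * hsum

theorem generation_eq_half [CharZero K] {ρ x₁ x₂ f g₁ g₂ : K} (hsum : x₁ + x₂ = 1)
    (hg₁ : g₁ = ρ * x₁ + f) (hg₂ : g₂ = ρ * x₂ - f) (hg : g₁ = g₂) :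
    g₁ = ρ / 2 ∧ g₂ = ρ / 2 ∧ f = ρ * (x₂ - x₁) / 2 := by
  refine ⟨?_, ?_, ?_⟩ <;> field_simp
  · linear_combination hg₁ + hg₂ + hg + ρ * hsum
  · linear_combination hg₁ + hg₂ - hg + ρ * hsum
  · linear_combination hg₂ - hg₁ + hg

end Equilibrium

/-- `Φ_T = α₁ x₁² + α₂ x₂²` evaluated at the equilibrium split. -/
noncomputable def equilibriumTransportCost (a b : ℝ) : ℝ :=
  a * (b / (a + b)) ^ 2 + b * (a / (a + b)) ^ 2

theorem equilibriumTransportCost_comm (a b : ℝ) :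
    equilibriumTransportCost a b = equilibriumTransportCost b a := by
  unfold equilibriumTransportCost
  rw [add_comm a b, add_comm]

theorem equilibriumTransportCost_eq {a b : ℝ} (hab : a + b ≠ 0) :
    equilibriumTransportCost a b = a * b / (a + b) := by
  unfold equilibriumTransportCost
  field_simp
  ring

theorem hasDerivAt_equilibriumTransportCost_left {a b : ℝ} (hab : a + b ≠ 0) :
    HasDerivAt (fun x => equilibriumTransportCost x b) (b ^ 2 / (a + b) ^ 2) a := by
  have hden : HasDerivAt (fun x => x + b) 1 a := (hasDerivAt_id a).add_const b
  have hclosed : HasDerivAt (fun x => x * b / (x + b)) (b ^ 2 / (a + b) ^ 2) a :=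
    (((hasDerivAt_id' a).mul_const b).fun_div hden hab).congr_deriv (by ring)
  have hnear : (fun x => equilibriumTransportCost x b) =ᶠ[nhds a] fun x => x * b / (x + b) := by
    filter_upwards [hden.continuousAt.eventually_ne hab] with x hx
    exact equilibriumTransportCost_eq hx
  exact hclosed.congr_of_eventuallyEq hnear

theorem hasDerivAt_equilibriumTransportCost_right {a b : ℝ} (hab : a + b ≠ 0) :
    HasDerivAt (fun y => equilibriumTransportCost a y) (a ^ 2 / (a + b) ^ 2) b := by
  simp_rw [equilibriumTransportCost_comm a, add_comm a b]
  exact hasDerivAt_equilibriumTransportCost_left (add_comm a b ▸ hab)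

theorem two_route_two_bus_uncongested_general
    (α₁ α₂ ρ : ℝ) (h21 : α₂ < α₁) (h2 : 0 < α₂)
    (x₁ x₂ f g₁ g₂ l₁ l₂ : ℝ)
    (hsum : x₁ + x₂ = 1)
    (hg₁ : g₁ = ρ * x₁ + f) (hg₂ : g₂ = ρ * x₂ - f)
    (hl₁ : l₁ = g₁) (hl₂ : l₂ = g₂) (hll : l₁ = l₂)
    (hUE : α₁ * x₁ + ρ * l₁ = α₂ * x₂ + ρ * l₂) :
    x₁ = α₂ / (α₁ + α₂) ∧ x₂ = α₁ / (α₁ + α₂) ∧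
    g₁ = ρ / 2 ∧ g₂ = ρ / 2 ∧
    f = ρ * (α₁ - α₂) / (2 * (α₁ + α₂)) ∧
    (1 / 2) * (g₁ ^ 2 + g₂ ^ 2) = ρ ^ 2 / 4 ∧
    α₁ * x₁ ^ 2 + α₂ * x₂ ^ 2 = α₁ * α₂ / (α₁ + α₂) ∧
    HasDerivAt (fun a : ℝ => a * (α₂ / (a + α₂)) ^ 2 + α₂ * (a / (a + α₂)) ^ 2)
      (α₂ ^ 2 / (α₁ + α₂) ^ 2) α₁ ∧
    0 < α₂ ^ 2 / (α₁ + α₂) ^ 2 ∧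
    HasDerivAt (fun a : ℝ => α₁ * (a / (α₁ + a)) ^ 2 + a * (α₁ / (α₁ + a)) ^ 2)
      (α₁ ^ 2 / (α₁ + α₂) ^ 2) α₂ ∧
    0 < α₁ ^ 2 / (α₁ + α₂) ^ 2 := by
  have h1 : 0 < α₁ := h2.trans h21
  have hα : α₁ + α₂ ≠ 0 := by positivity
  have hbal : α₁ * x₁ = α₂ * x₂ := by
    rw [hll] at hUE
    linarith
  obtain ⟨hx₁, hx₂⟩ := flows_eq_of_mul_eq_mul hα hsum hbal
  obtain ⟨hg₁', hg₂', hf⟩ := generation_eq_half hsum hg₁ hg₂ (hl₁ ▸ hl₂ ▸ hll)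
  refine ⟨hx₁, hx₂, hg₁', hg₂', ?_, ?_, ?_, hasDerivAt_equilibriumTransportCost_left hα,
    by positivity, hasDerivAt_equilibriumTransportCost_right hα, by positivity⟩
  · rw [hf, hx₁, hx₂]
    field_simp
  · rw [hg₁', hg₂']
    ring
  · rw [hx₁, hx₂]
    exact equilibriumTransportCost_eq hα

/-- 2-Route 2-Bus coupled system, uncongested power line: the GUE has the stated closed
form, the power cost `Φ_P = ρ²/4` is parameter-independent, the transportation cost is
`Φ_T = α₁α₂/(α₁+α₂)`, and `Φ_T` has strictly positive partial derivatives in `α₁` and `α₂`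
(so no generalized Braess' paradox occurs). -/
theorem two_route_two_bus_uncongested
    (α₁ α₂ ρ : ℝ) (h21 : α₂ < α₁) (h2 : 0 < α₂) (hρ : 0 < ρ)
    (x₁ x₂ f g₁ g₂ l₁ l₂ : ℝ)
    (hsum : x₁ + x₂ = 1) (hx₁ : 0 ≤ x₁) (hx₂ : 0 ≤ x₂)
    (hg₁ : g₁ = ρ * x₁ + f) (hg₂ : g₂ = ρ * x₂ - f)
    (hl₁ : l₁ = g₁) (hl₂ : l₂ = g₂) (hll : l₁ = l₂)
    (hUE : α₁ * x₁ + ρ * l₁ = α₂ * x₂ + ρ * l₂) :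
    x₁ = α₂ / (α₁ + α₂) ∧ x₂ = α₁ / (α₁ + α₂) ∧
    g₁ = ρ / 2 ∧ g₂ = ρ / 2 ∧
    f = ρ * (α₁ - α₂) / (2 * (α₁ + α₂)) ∧
    (1 / 2) * (g₁ ^ 2 + g₂ ^ 2) = ρ ^ 2 / 4 ∧
    α₁ * x₁ ^ 2 + α₂ * x₂ ^ 2 = α₁ * α₂ / (α₁ + α₂) ∧
    HasDerivAt (fun a : ℝ => a * (α₂ / (a + α₂)) ^ 2 + α₂ * (a / (a + α₂)) ^ 2)
      (α₂ ^ 2 / (α₁ + α₂) ^ 2) α₁ ∧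
    0 < α₂ ^ 2 / (α₁ + α₂) ^ 2 ∧
    HasDerivAt (fun a : ℝ => α₁ * (a / (α₁ + a)) ^ 2 + a * (α₁ / (α₁ + a)) ^ 2)
      (α₁ ^ 2 / (α₁ + α₂) ^ 2) α₂ ∧
    0 < α₁ ^ 2 / (α₁ + α₂) ^ 2 :=
  two_route_two_bus_uncongested_general α₁ α₂ ρ h21 h2 x₁ x₂ f g₁ g₂ l₁ l₂ hsum hg₁ hg₂ hl₁ hl₂ hll
    hUE
end

section
/- (2-Route 2-Bus system, congested case: type T-P Braess' paradox always occurs.) For α₁, α₂, ρ, f̄ > 0 define S := α₁ + α₂ + 2ρ², x₁ := (α₂ + ρ² − 2ρf̄)/S, x₂ := 1 − x₁, λ₁ := ρx₁ + f̄, λ₂ := ρx₂ − f̄, and Φ_P := (1/2)(λ₁² + λ₂²). Assume x₁ > 0 and the congestion condition λ₂ > λ₁, i.e., ρ(x₂ − x₁) > 2f̄. Then the partial derivative of Φ_P with respect to α₂ (holding α₁, ρ, f̄ fixed) equals ρ(λ₁ − λ₂)x₂/S and is strictly negative; i.e., increasing the capacity of road 2 (decreasing α₂) strictly increases the power system social cost,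 so the 2-Route 2-Bus coupled system always exhibits a type T-P Braess' paradox when the power line is congested. -/
/-- 2-Route 2-Bus coupled system with congested power line: the partial derivative of the
power system social cost `Φ_P` with respect to `α₂` equals `ρ(λ₁−λ₂)x₂/S` and is strictly
negative, i.e., a type T-P Braess' paradox always occurs. -/
theorem two_route_two_bus_TP_always
    (α₁ α₂ ρ fb : ℝ) (h1 : 0 < α₁) (h2 : 0 < α₂) (hρ : 0 < ρ) (hf : 0 < fb)
    (S x₁ x₂ l₁ l₂ : ℝ)
    (hS : S = α₁ + α₂ + 2 * ρ ^ 2)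
    (hx₁ : x₁ = (α₂ + ρ ^ 2 - 2 * ρ * fb) / S)
    (hx₂ : x₂ = 1 - x₁)
    (hl₁ : l₁ = ρ * x₁ + fb) (hl₂ : l₂ = ρ * x₂ - fb)
    (hx₁pos : 0 < x₁) (hcong : 2 * fb < ρ * (x₂ - x₁)) :
    HasDerivAt
      (fun a : ℝ =>
        (1 / 2) *
          ((ρ * ((a + ρ ^ 2 - 2 * ρ * fb) / (α₁ + a + 2 * ρ ^ 2)) + fb) ^ 2 +
            (ρ * (1 - (a + ρ ^ 2 - 2 * ρ * fb) / (α₁ + a + 2 * ρ ^ 2)) - fb) ^ 2))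
      (ρ * (l₁ - l₂) * x₂ / S) α₂ ∧
    ρ * (l₁ - l₂) * x₂ / S < 0 := by
  have hSpos : 0 < S := by
    rw [hS]; positivity
  have hS0 : S ≠ 0 := ne_of_gt hSpos
  have hden : α₁ + α₂ + 2 * ρ ^ 2 ≠ 0 := by rw [← hS]; exact hS0
  -- derivative of u(a) = (a + c)/(α₁ + a + 2ρ²)
  have hnum : HasDerivAt (fun a : ℝ => a + ρ ^ 2 - 2 * ρ * fb) 1 α₂ := by
    simpa using ((hasDerivAt_id α₂).add_const (ρ ^ 2)).sub_const (2 * ρ * fb)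
  have hd : HasDerivAt (fun a : ℝ => α₁ + a + 2 * ρ ^ 2) 1 α₂ := by
    simpa using ((hasDerivAt_id α₂).const_add α₁).add_const (2 * ρ ^ 2)
  have hu : HasDerivAt (fun a : ℝ => (a + ρ ^ 2 - 2 * ρ * fb) / (α₁ + a + 2 * ρ ^ 2))
      ((1 * (α₁ + α₂ + 2 * ρ ^ 2) - (α₂ + ρ ^ 2 - 2 * ρ * fb) * 1) /
        (α₁ + α₂ + 2 * ρ ^ 2) ^ 2) α₂ := hnum.div hd hden
  set u' : ℝ := (1 * (α₁ + α₂ + 2 * ρ ^ 2) - (α₂ + ρ ^ 2 - 2 * ρ * fb) * 1) /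
        (α₁ + α₂ + 2 * ρ ^ 2) ^ 2 with hu'
  have h1' : HasDerivAt (fun a : ℝ =>
      (ρ * ((a + ρ ^ 2 - 2 * ρ * fb) / (α₁ + a + 2 * ρ ^ 2)) + fb) ^ 2)
      (2 * (ρ * ((α₂ + ρ ^ 2 - 2 * ρ * fb) / (α₁ + α₂ + 2 * ρ ^ 2)) + fb) ^ 1 * (ρ * u'))
      α₂ := ((hu.const_mul ρ).add_const fb).pow 2
  have h2' : HasDerivAt (fun a : ℝ =>
      (ρ * (1 - (a + ρ ^ 2 - 2 * ρ * fb) / (α₁ + a + 2 * ρ ^ 2)) - fb) ^ 2)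
      (2 * (ρ * (1 - (α₂ + ρ ^ 2 - 2 * ρ * fb) / (α₁ + α₂ + 2 * ρ ^ 2)) - fb) ^ 1 *
        (ρ * -u')) α₂ := (((hu.const_sub 1).const_mul ρ).sub_const fb).pow 2
  have hΦ := (h1'.add h2').const_mul (1 / 2 : ℝ)
  have hx₂pos : 0 < x₂ := by
    have : x₂ = (α₁ + ρ ^ 2 + 2 * ρ * fb) / S := by
      rw [hx₂, hx₁, hS]; field_simp; ring
    rw [this]; positivity
  have hderiv_eq : (1 / 2 : ℝ) *
      (2 * (ρ * ((α₂ + ρ ^ 2 - 2 * ρ * fb) / (α₁ + α₂ + 2 * ρ ^ 2)) + fb) ^ 1 * (ρ * u') +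
        2 * (ρ * (1 - (α₂ + ρ ^ 2 - 2 * ρ * fb) / (α₁ + α₂ + 2 * ρ ^ 2)) - fb) ^ 1 *
          (ρ * -u')) = ρ * (l₁ - l₂) * x₂ / S := by
    subst hl₁ hl₂ hx₂ hx₁ hS
    rw [hu']
    field_simp
    ring
  constructor
  · rw [← hderiv_eq]; exact hΦ
  · have hll : l₁ - l₂ < 0 := by
      rw [hl₁, hl₂]; nlinarith
    have : ρ * (l₁ - l₂) * x₂ < 0 :=
      mul_neg_of_neg_of_pos (mul_neg_of_pos_of_neg hρ hll) hx₂pos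
    exact div_neg_of_neg_of_pos this hSpos
end

section
/- (2-Route 2-Bus system, congested case: type T-T Braess' paradox for some parameters.) There exist α₁, α₂, ρ, f̄ > 0 such that, with S := α₁ + α₂ + 2ρ², x₁ := (α₂ + ρ² − 2ρf̄)/S, x₂ := 1 − x₁, λ₁ := ρx₁ + f̄, λ₂ := ρx₂ − f̄, the conditions x₁ > 0 and ρ(x₂ − x₁) > 2f̄ (power line congested) hold, and the partial derivative with respect to α₁ of the transportation social cost Φ_T := α₁x₁² + α₂x₂² (with x₁, x₂ regarded as the above functions of (α₁, α₂, ρ, f̄)) is strictly negative; i.e., the 2-Route 2-Bus coupled system exhibits a type T-T Braess' paradox for certain α₁, α₂, f̄, ρ. -/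
/-!
Along the user equilibrium `x₁ = (α₂ + ρ² - 2ρf̄)/S`, `S = α₁ + α₂ + 2ρ²`, we have
`∂x₁/∂α₁ = -x₁/S`, and the equilibrium condition turns the travel-cost imbalance
`α₁x₁ - α₂x₂` into `ρ (ρ(x₂ - x₁) - 2f̄)`, the price gap across the congested line. Hence
`∂Φ_T/∂α₁ = x₁ (x₁ - 2ρ(ρ(x₂ - x₁) - 2f̄)/S)`, which is negative as soon as the congestion
margin `ρ(x₂ - x₁) - 2f̄` is large compared with `x₁ S`; `α₁ = 1000, α₂ = 1, ρ = 10, f̄ = 1`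
is such a case.
-/

noncomputable def equilibriumShare (α₁ α₂ ρ fb : ℝ) : ℝ :=
  (α₂ + ρ ^ 2 - 2 * ρ * fb) / (α₁ + α₂ + 2 * ρ ^ 2)

noncomputable def transportCost (α₁ α₂ ρ fb : ℝ) : ℝ :=
  α₁ * equilibriumShare α₁ α₂ ρ fb ^ 2 + α₂ * (1 - equilibriumShare α₁ α₂ ρ fb) ^ 2

section

variable {α₁ α₂ ρ fb : ℝ}

theorem equilibriumShare_balance (hS : α₁ + α₂ + 2 * ρ ^ 2 ≠ 0) :
    α₁ * equilibriumShare α₁ α₂ ρ fb - α₂ * (1 - equilibriumShare α₁ α₂ ρ fb) =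
      ρ * (ρ * ((1 - equilibriumShare α₁ α₂ ρ fb) - equilibriumShare α₁ α₂ ρ fb) - 2 * fb) := by
  have hx : equilibriumShare α₁ α₂ ρ fb * (α₁ + α₂ + 2 * ρ ^ 2) = α₂ + ρ ^ 2 - 2 * ρ * fb :=
    div_mul_cancel₀ _ hS
  linear_combination hx

theorem hasDerivAt_equilibriumShare (hS : α₁ + α₂ + 2 * ρ ^ 2 ≠ 0) :
    HasDerivAt (fun a => equilibriumShare a α₂ ρ fb)
      (-equilibriumShare α₁ α₂ ρ fb / (α₁ + α₂ + 2 * ρ ^ 2)) α₁ := by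
  have hS' : HasDerivAt (fun a : ℝ => a + α₂ + 2 * ρ ^ 2) 1 α₁ :=
    ((hasDerivAt_id α₁).add_const α₂).add_const _
  refine ((hasDerivAt_const α₁ (α₂ + ρ ^ 2 - 2 * ρ * fb)).div hS' hS).congr_deriv ?_
  unfold equilibriumShare
  field_simp
  ring

theorem hasDerivAt_transportCost (hS : α₁ + α₂ + 2 * ρ ^ 2 ≠ 0) :
    HasDerivAt (fun a => transportCost a α₂ ρ fb)
      (equilibriumShare α₁ α₂ ρ fb * (equilibriumShare α₁ α₂ ρ fb -
        2 * ρ * (ρ * ((1 - equilibriumShare α₁ α₂ ρ fb) - equilibriumShare α₁ α₂ ρ fb) - 2 * fb) /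
          (α₁ + α₂ + 2 * ρ ^ 2))) α₁ := by
  have hx := hasDerivAt_equilibriumShare (fb := fb) hS
  have hΦ : HasDerivAt (fun a => transportCost a α₂ ρ fb) _ α₁ :=
    ((hasDerivAt_id' α₁).mul (hx.pow 2)).add (((hasDerivAt_const α₁ 1).sub hx).pow 2 |>.const_mul α₂)
  refine hΦ.congr_deriv ?_
  simp only [Pi.pow_apply, Pi.sub_apply]
  linear_combination (-2 * equilibriumShare α₁ α₂ ρ fb / (α₁ + α₂ + 2 * ρ ^ 2)) *
    equilibriumShare_balance (fb := fb) hS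

end

/-- 2-Route 2-Bus coupled system with congested power line: for some parameters
`α₁, α₂, ρ, f̄ > 0` satisfying `x₁ > 0` and the congestion condition, the partial
derivative of the transportation social cost `Φ_T` with respect to `α₁` is strictly
negative, i.e., a type T-T Braess' paradox occurs. -/
theorem two_route_two_bus_TT_exists :
    ∃ α₁ α₂ ρ fb : ℝ, 0 < α₁ ∧ 0 < α₂ ∧ 0 < ρ ∧ 0 < fb ∧
      0 < (α₂ + ρ ^ 2 - 2 * ρ * fb) / (α₁ + α₂ + 2 * ρ ^ 2) ∧
      2 * fb < ρ * ((1 - (α₂ + ρ ^ 2 - 2 * ρ * fb) / (α₁ + α₂ + 2 * ρ ^ 2)) -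
        (α₂ + ρ ^ 2 - 2 * ρ * fb) / (α₁ + α₂ + 2 * ρ ^ 2)) ∧
      ∃ D : ℝ, D < 0 ∧
        HasDerivAt
          (fun a : ℝ =>
            a * ((α₂ + ρ ^ 2 - 2 * ρ * fb) / (a + α₂ + 2 * ρ ^ 2)) ^ 2 +
              α₂ * (1 - (α₂ + ρ ^ 2 - 2 * ρ * fb) / (a + α₂ + 2 * ρ ^ 2)) ^ 2)
          D α₁ := by
  refine ⟨1000, 1, 10, 1, by norm_num, by norm_num, by norm_num, by norm_num, by norm_num,
    by norm_num, _, ?_, hasDerivAt_transportCost (by norm_num)⟩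
  norm_num [equilibriumShare]
end

section
/- (Relation between LMPs and line congestion on a radial network.) Let G be a finite tree (a finite connected acyclic simple graph) on vertex set V. Let B : V × V → ℝ be symmetric with B(i,j) ≠ 0 whenever i and j are adjacent in G, and let d : V × V → ℝ be antisymmetric (d(i,j) = −d(j,i)). Suppose λ : V → ℝ satisfies, for every vertex i, ∑_{j adjacent to i} B(i,j)·(λ(i) − λ(j)) = ∑_{j adjacent to i} B(i,j)·d(i,j). Then for every pair of adjacent vertices i, j one has λ(i) − λ(j) = d(i,j). In particular, if v₁, v₂ ∈ V and d(i,j) = 0 for every edge {i,j} on the (unique) path in G from v₁ to v₂, then λ(v₁) = λ(v₂): any two buses of a radial power network connected by an uncongested path have the same locational marginal price. -/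
/-!
The line flows `f u v = B u v * (lam u - lam v - d u v)` are antisymmetric, and stationarity says
that the net outflow of `f` at every bus is zero. In a tree every line `{i, j}` is a bridge; summing
the net outflows over the component `S` of `i` once that line is removed, the flows inside `S`
cancel and the only line leaving `S` is `i → j`, so `f i j = 0`, whence `lam i - lam j = d i j`
since `B i j ≠ 0`. Along an uncongested path consecutive prices are therefore equal.
-/

open Finset

theorem Finset.sum_sum_eq_zero_of_antisymm {ι M : Type*} [AddCommGroup M] [IsAddTorsionFree M]
    {f : ι → ι → M} (hf : ∀ i j, f j i = -f i j) (s : Finset ι) :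
    ∑ i ∈ s, ∑ j ∈ s, f i j = 0 := by
  refine self_eq_neg.mp ?_
  conv_lhs => rw [sum_comm]
  simp only [← sum_neg_distrib]
  exact sum_congr rfl fun i _ => sum_congr rfl fun j _ => hf i j

namespace SimpleGraph

variable {V : Type*} {G : SimpleGraph V}

theorem Walk.apply_eq_of_forall_mem_edges {α : Type*} {g : V → α} {u v : V} (p : G.Walk u v)
    (h : ∀ i j, s(i, j) ∈ p.edges → g i = g j) : g u = g v := by
  induction p with
  | nil => rfl
  | cons hadj q ih => exact (h _ _ (by simp)).trans (ih fun i j hq => h i j (by simp [hq]))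

theorem eq_of_reachable_deleteEdges_of_not_reachable {e : Sym2 V} {i u v : V}
    (hu : (G.deleteEdges {e}).Reachable i u) (huv : G.Adj u v)
    (hv : ¬ (G.deleteEdges {e}).Reachable i v) : s(u, v) = e := by
  by_contra hne
  exact hv (hu.trans (Adj.reachable (by simpa [deleteEdges_adj, hne] using huv)))

variable [Fintype V] [DecidableRel G.Adj] {M : Type*} [AddCommGroup M] [IsAddTorsionFree M]
  {f : V → V → M}

theorem sum_sum_neighborFinset_eq_sum_boundary [DecidableEq V] (hf : ∀ u v, f v u = -f u v)
    (S : Finset V) :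
    ∑ u ∈ S, ∑ v ∈ G.neighborFinset u, f u v =
      ∑ u ∈ S, ∑ v ∈ G.neighborFinset u with v ∉ S, f u v := by
  have hinner : ∑ u ∈ S, ∑ v ∈ G.neighborFinset u with v ∈ S, f u v = 0 := by
    have hfilter (u : V) : {v ∈ G.neighborFinset u | v ∈ S} = {v ∈ S | G.Adj u v} := by
      ext v
      simp [and_comm]
    simp_rw [hfilter, sum_filter]
    refine sum_sum_eq_zero_of_antisymm (fun u v => ?_) S
    by_cases huv : G.Adj u v <;> simp [huv, G.adj_comm v u, hf u v]
  simp_rw [← sum_filter_add_sum_filter_not (G.neighborFinset _) (· ∈ S), sum_add_distrib, hinner,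
    zero_add]

theorem eq_zero_of_adj_of_isBridge (hf : ∀ u v, f v u = -f u v)
    (hdiv : ∀ u, ∑ v ∈ G.neighborFinset u, f u v = 0) {i j : V} (hij : G.Adj i j)
    (hbridge : G.IsBridge s(i, j)) : f i j = 0 := by
  classical
  set S : Finset V := {u | (G.deleteEdges {s(i, j)}).Reachable i u}
  have hS {u : V} : u ∈ S ↔ (G.deleteEdges {s(i, j)}).Reachable i u := by simp [S]
  have hiS : i ∈ S := hS.mpr .rfl
  have hjS : j ∉ S := hS.not.mpr (isBridge_iff.mp hbridge)
  have hboundary {u v : V} (hu : u ∈ S) (hv : v ∈ G.neighborFinset u) (hvS : v ∉ S) :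
      u = i ∧ v = j := by
    rw [mem_neighborFinset] at hv
    rcases Sym2.eq_iff.mp (eq_of_reachable_deleteEdges_of_not_reachable (hS.mp hu) hv
      (hS.not.mp hvS)) with h | h
    · exact h
    · exact absurd (h.1 ▸ hu) hjS
  calc f i j = ∑ u ∈ S, ∑ v ∈ G.neighborFinset u with v ∉ S, f u v := by
        rw [sum_eq_single_of_mem i hiS, sum_eq_single_of_mem j]
        · simpa [hjS] using hij
        · exact fun v hv hvj =>
            absurd (hboundary hiS (mem_filter.mp hv).1 (mem_filter.mp hv).2).2 hvj
        · exact fun u hu hui => sum_eq_zero fun v hv =>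
            absurd (hboundary hu (mem_filter.mp hv).1 (mem_filter.mp hv).2).1 hui
    _ = ∑ u ∈ S, ∑ v ∈ G.neighborFinset u, f u v :=
        (sum_sum_neighborFinset_eq_sum_boundary hf S).symm
    _ = 0 := sum_eq_zero fun u _ => hdiv u

end SimpleGraph

open SimpleGraph in
theorem lmp_equal_along_uncongested_path_general
    {V : Type*} [Fintype V]
    (G : SimpleGraph V) [DecidableRel G.Adj]
    (hacyc : G.IsAcyclic)
    (B : V → V → ℝ) (hBsymm : ∀ i j, B i j = B j i)
    (hBne : ∀ i j, G.Adj i j → B i j ≠ 0)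
    (d : V → V → ℝ) (hd : ∀ i j, d i j = -d j i)
    (lam : V → ℝ)
    (hstat : ∀ i, ∑ j ∈ G.neighborFinset i, B i j * (lam i - lam j) =
      ∑ j ∈ G.neighborFinset i, B i j * d i j) :
    (∀ i j, G.Adj i j → lam i - lam j = d i j) ∧
    (∀ (v₁ v₂ : V) (p : G.Walk v₁ v₂), p.IsPath →
      (∀ i j, G.Adj i j → s(i, j) ∈ p.edges → d i j = 0) → lam v₁ = lam v₂) := by
  set flow : V → V → ℝ := fun u v => B u v * (lam u - lam v - d u v)
  have hanti (u v : V) : flow v u = -flow u v := by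
    simp only [flow, hBsymm v u, hd v u]
    ring
  have hdiv (u : V) : ∑ v ∈ G.neighborFinset u, flow u v = 0 := by
    have h := hstat u
    simp only [flow, mul_sub, sum_sub_distrib] at h ⊢
    linarith
  have hedge (i j : V) (hij : G.Adj i j) : lam i - lam j = d i j := by
    have h := eq_zero_of_adj_of_isBridge hanti hdiv hij
      (isAcyclic_iff_forall_adj_isBridge.mp hacyc hij)
    simpa [flow, hBne i j hij, sub_eq_zero] using h
  refine ⟨hedge, fun v₁ v₂ p _ hcong => p.apply_eq_of_forall_mem_edges fun i j hmem => ?_⟩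
  have hij := p.adj_of_mem_edges hmem
  linarith [hedge i j hij, hcong i j hij hmem]

/-- On a finite tree, if the locational marginal prices `lam` satisfy the nodal
stationarity conditions `∑_{j ~ i} B i j (lam i − lam j) = ∑_{j ~ i} B i j (d i j)`
with symmetric nonzero line susceptances `B` and antisymmetric congestion duals `d`,
then `lam i − lam j = d i j` across every edge; in particular any two vertices joined
by a path on which `d` vanishes have equal prices. -/
theorem lmp_equal_along_uncongested_path
    {V : Type*} [Fintype V] [DecidableEq V]
    (G : SimpleGraph V) [DecidableRel G.Adj]
    (hconn : G.Connected) (hacyc : G.IsAcyclic)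
    (B : V → V → ℝ) (hBsymm : ∀ i j, B i j = B j i)
    (hBne : ∀ i j, G.Adj i j → B i j ≠ 0)
    (d : V → V → ℝ) (hd : ∀ i j, d i j = -d j i)
    (lam : V → ℝ)
    (hstat : ∀ i, ∑ j ∈ G.neighborFinset i, B i j * (lam i - lam j) =
      ∑ j ∈ G.neighborFinset i, B i j * d i j) :
    (∀ i j, G.Adj i j → lam i - lam j = d i j) ∧
    (∀ (v₁ v₂ : V) (p : G.Walk v₁ v₂), p.IsPath →
      (∀ i j, G.Adj i j → s(i, j) ∈ p.edges → d i j = 0) → lam v₁ = lam v₂) :=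
  lmp_equal_along_uncongested_path_general G hacyc B hBsymm hBne d hd lam hstat
end

section
/- (Closed form of the aggregate equilibrium.) Let Γ ∈ ℝ^{K×K} be invertible with D := 1ᵀΓ⁻¹1 ≠ 0, and let c ∈ ℝ^K. Then the linear system Γx − η·1 = −c, 1ᵀx = 1 in the unknowns (x, η) ∈ ℝ^K × ℝ has a unique solution, given by x = −(Γ⁻¹ − D⁻¹·Γ⁻¹11ᵀΓ⁻¹)·c + D⁻¹·Γ⁻¹1 and η = D⁻¹·(1 + 1ᵀΓ⁻¹c). -/
open Matrix

lemma ones_mulVec' {K : ℕ} (v : Fin K → ℝ) :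
    (Matrix.of fun _ _ => (1 : ℝ)).mulVec v
      = ((1 : Fin K → ℝ) ⬝ᵥ v) • (1 : Fin K → ℝ) := by
  funext i
  simp [Matrix.mulVec, dotProduct]

/-- Closed form of the aggregate equilibrium: if `Γ` is invertible and `D := 1ᵀΓ⁻¹1 ≠ 0`,
the linear system `Γx − η·1 = −c`, `1ᵀx = 1` has the unique solution
`x = −(Γ⁻¹ − D⁻¹Γ⁻¹11ᵀΓ⁻¹)c + D⁻¹Γ⁻¹1`, `η = D⁻¹(1 + 1ᵀΓ⁻¹c)`. -/
theorem aggregate_equilibrium_closed_form {K : ℕ}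
    (Γ : Matrix (Fin K) (Fin K) ℝ) (hΓ : IsUnit Γ)
    (hD : (1 : Fin K → ℝ) ⬝ᵥ Γ⁻¹.mulVec 1 ≠ 0) (c : Fin K → ℝ) :
    let D : ℝ := (1 : Fin K → ℝ) ⬝ᵥ Γ⁻¹.mulVec 1
    let onesKK : Matrix (Fin K) (Fin K) ℝ := Matrix.of fun _ _ => (1 : ℝ)
    let x₀ : Fin K → ℝ :=
      -((Γ⁻¹ - D⁻¹ • (Γ⁻¹ * onesKK * Γ⁻¹)).mulVec c) + D⁻¹ • Γ⁻¹.mulVec 1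
    let η₀ : ℝ := D⁻¹ * (1 + (1 : Fin K → ℝ) ⬝ᵥ Γ⁻¹.mulVec c)
    (Γ.mulVec x₀ - η₀ • (1 : Fin K → ℝ) = -c ∧ (1 : Fin K → ℝ) ⬝ᵥ x₀ = 1) ∧
    (∀ (x : Fin K → ℝ) (η : ℝ),
      Γ.mulVec x - η • (1 : Fin K → ℝ) = -c → (1 : Fin K → ℝ) ⬝ᵥ x = 1 →
      x = x₀ ∧ η = η₀) := by
  intro D onesKK x₀ η₀
  have hdet : IsUnit Γ.det := (Matrix.isUnit_iff_isUnit_det Γ).mp hΓ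
  have h1 : Γ * Γ⁻¹ = 1 := Matrix.mul_nonsing_inv Γ hdet
  have h2 : Γ⁻¹ * Γ = 1 := Matrix.nonsing_inv_mul Γ hdet
  set s : ℝ := (1 : Fin K → ℝ) ⬝ᵥ Γ⁻¹.mulVec c with hs
  -- key: the middle matrix applied to c
  have hmid : (Γ⁻¹ * onesKK * Γ⁻¹).mulVec c = s • Γ⁻¹.mulVec 1 := by
    rw [Matrix.mul_assoc, ← Matrix.mulVec_mulVec, ← Matrix.mulVec_mulVec,
      show (onesKK : Matrix (Fin K) (Fin K) ℝ) = Matrix.of fun _ _ => (1:ℝ) from rfl,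
      ones_mulVec' (Γ⁻¹.mulVec c), Matrix.mulVec_smul]
  have hx0 : x₀ = -(Γ⁻¹.mulVec c) + (D⁻¹ * s) • Γ⁻¹.mulVec 1 + D⁻¹ • Γ⁻¹.mulVec 1 := by
    show -((Γ⁻¹ - D⁻¹ • (Γ⁻¹ * onesKK * Γ⁻¹)).mulVec c) + D⁻¹ • Γ⁻¹.mulVec 1 = _
    rw [Matrix.sub_mulVec, Matrix.smul_mulVec, hmid, smul_smul]
    funext i
    simp
    ring
  have hinvΓ : ∀ v : Fin K → ℝ, Γ.mulVec (Γ⁻¹.mulVec v) = v := by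
    intro v; rw [Matrix.mulVec_mulVec, h1, Matrix.one_mulVec]
  have hΓinv : ∀ v : Fin K → ℝ, Γ⁻¹.mulVec (Γ.mulVec v) = v := by
    intro v; rw [Matrix.mulVec_mulVec, h2, Matrix.one_mulVec]
  have hΓx₀ : Γ.mulVec x₀ = -c + (D⁻¹ * s) • (1 : Fin K → ℝ) + D⁻¹ • (1 : Fin K → ℝ) := by
    rw [hx0]
    rw [Matrix.mulVec_add, Matrix.mulVec_add, Matrix.mulVec_neg, Matrix.mulVec_smul,
      Matrix.mulVec_smul, hinvΓ, hinvΓ]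
  have hη₀ : η₀ = D⁻¹ * (1 + s) := rfl
  have hDD : D⁻¹ * D = 1 := inv_mul_cancel₀ hD
  have hdot : (1 : Fin K → ℝ) ⬝ᵥ x₀ = 1 := by
    rw [hx0, dotProduct_add, dotProduct_add, dotProduct_neg, dotProduct_smul,
      dotProduct_smul]
    simp only [smul_eq_mul, ← hs]
    linear_combination (s + 1) * hDD
  refine ⟨⟨?_, hdot⟩, ?_⟩
  · rw [hΓx₀, hη₀]
    funext i
    simp
    ring
  · intro x η hx hsum
    have hxval : x = η • Γ⁻¹.mulVec 1 - Γ⁻¹.mulVec c := by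
      have : Γ.mulVec x = η • (1 : Fin K → ℝ) - c := by
        have := hx
        funext i
        have h := congrFun hx i
        simp at h ⊢
        linarith
      calc x = Γ⁻¹.mulVec (Γ.mulVec x) := (hΓinv x).symm
        _ = η • Γ⁻¹.mulVec 1 - Γ⁻¹.mulVec c := by
            rw [this, Matrix.mulVec_sub, Matrix.mulVec_smul]
    have hsum' : η * D - s = 1 := by
      rw [hxval] at hsum
      simpa [dotProduct_sub, dotProduct_smul, smul_eq_mul, ← hs] using hsum
    have hη : η = η₀ := by
      rw [hη₀]
      linear_combination D⁻¹ * hsum' - η * hDD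
    refine ⟨?_, hη⟩
    rw [hxval, hη, hη₀, hx0]
    funext i
    simp
    ring
end

section
/- (Necessary and sufficient conditions for aggregated transportation-expansion Braess' paradox: derivative formulas in β̂.) Let K ≥ 1, let ᾱ ∈ ℝ^{K×K} be symmetric, Q̂ ∈ ℝ^K with all entries positive, ρ > 0, μ̂ ∈ ℝ^K, f̂ ∈ ℝ^K, and suppose Γ := ᾱ + ρ²·diag(Q̂) is invertible with D := 1ᵀΓ⁻¹1 ≠ 0; set B̂_ul⁻¹ := Γ⁻¹ − D⁻¹Γ⁻¹11ᵀΓ⁻¹. For β̂ ∈ ℝ^K let x̂(β̂) := −B̂_ul⁻¹·(β̂ + ρ·diag(Q̂)·f̂ + ρ·μ̂) + D⁻¹·Γ⁻¹1, λ̂(β̂) := diag(Q̂)·(ρ·x̂(β̂) + f̂) + μ̂, Φ_T(β̂) := x̂(β̂)ᵀᾱ·x̂(β̂) + β̂ᵀx̂(β̂), and Φ_P(β̂) := ∑_k [ (1/2)·Q̂_k·(ρ·x̂_k(β̂) + f̂_k)² + μ̂_k·(ρ·x̂_k(β̂) + f̂_k) ]. Then for every k, Φ_T and Φ_P are differentiable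 in β̂ with ∂Φ_T/∂β̂_k = x̂_k(β̂) − (2·ᾱ·x̂(β̂) + β̂)ᵀ·B̂_ul⁻¹·e_k and ∂Φ_P/∂β̂_k = −ρ·λ̂(β̂)ᵀ·B̂_ul⁻¹·e_k, where e_k is the k-th standard basis vector. -/
open Matrix

/-! `x̂` is affine in `β̂` with linear part `-B̂_ul⁻¹`, so along the coordinate line through `β̂`
in direction `e_k` it moves with velocity `-B̂_ul⁻¹ e_k`. Both formulas are then the product and
chain rules for the quadratic costs `Φ_T`, `Φ_P`; for `Φ_T` the symmetry of `ᾱ` merges the two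
cross terms of `x̂ᵀ ᾱ x̂` into `2 (ᾱ x̂)ᵀ`, and for `Φ_P` the derivative of each summand in its
injection `ρ x̂_j + f̂_j` is the price `λ̂_j`. -/

section
variable {𝕜 ι κ : Type*} [NontriviallyNormedField 𝕜] [Fintype ι] {t : 𝕜}
  {f g : 𝕜 → ι → 𝕜} {f' g' : ι → 𝕜}

theorem HasDerivAt.dotProduct (hf : HasDerivAt f f' t) (hg : HasDerivAt g g' t) :
    HasDerivAt (fun s => f s ⬝ᵥ g s) (f' ⬝ᵥ g t + f t ⬝ᵥ g') t := by
  simp only [_root_.dotProduct, ← Finset.sum_add_distrib]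
  exact HasDerivAt.fun_sum fun i _ =>
    (hasDerivAt_pi.1 hf i).mul (hasDerivAt_pi.1 hg i)

theorem HasDerivAt.mulVec (A : Matrix κ ι 𝕜) (hf : HasDerivAt f f' t) :
    HasDerivAt (fun s => A *ᵥ f s) (A *ᵥ f') t :=
  hasDerivAt_pi.2 fun i => by
    have := (hasDerivAt_const t (A i)).dotProduct hf
    rwa [zero_dotProduct, zero_add] at this

end

theorem HasDerivAt.sum_half_mul_sq_add_mul {ι : Type*} [Fintype ι] [DecidableEq ι] {t : ℝ}
    {y : ℝ → ι → ℝ} {y' : ι → ℝ} (Q μ : ι → ℝ) (hy : HasDerivAt y y' t) :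
    HasDerivAt (fun s => ∑ j, (1 / 2 * Q j * y s j ^ 2 + μ j * y s j))
      ((diagonal Q *ᵥ y t + μ) ⬝ᵥ y') t := by
  have hterm : ∀ j, HasDerivAt (fun s => 1 / 2 * Q j * y s j ^ 2 + μ j * y s j)
      ((Q j * y t j + μ j) * y' j) t := fun j => by
    have hyj := hasDerivAt_pi.1 hy j
    refine ((hyj.pow 2).const_mul (1 / 2 * Q j)).add (hyj.const_mul (μ j)) |>.congr_deriv ?_
    ring
  refine (HasDerivAt.fun_sum fun j (_ : j ∈ Finset.univ) => hterm j).congr_deriv ?_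
  simp [_root_.dotProduct, mulVec_diagonal]

theorem ATBP_beta_derivatives_general {K : ℕ}
    (abar : Matrix (Fin K) (Fin K) ℝ) (habar : abarᵀ = abar)
    (Qhat : Fin K → ℝ)
    (ρ : ℝ)
    (muhat fhat : Fin K → ℝ) :
    let Γ : Matrix (Fin K) (Fin K) ℝ := abar + ρ ^ 2 • Matrix.diagonal Qhat
    let D : ℝ := (1 : Fin K → ℝ) ⬝ᵥ Γ⁻¹.mulVec 1
    let onesKK : Matrix (Fin K) (Fin K) ℝ := Matrix.of fun _ _ => (1 : ℝ)
    let Bul : Matrix (Fin K) (Fin K) ℝ := Γ⁻¹ - D⁻¹ • (Γ⁻¹ * onesKK * Γ⁻¹)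
    let xhat : (Fin K → ℝ) → Fin K → ℝ := fun bh =>
      -(Bul.mulVec (bh + ρ • (Matrix.diagonal Qhat).mulVec fhat + ρ • muhat)) +
        D⁻¹ • Γ⁻¹.mulVec 1
    let lamhat : (Fin K → ℝ) → Fin K → ℝ := fun bh =>
      (Matrix.diagonal Qhat).mulVec (ρ • xhat bh + fhat) + muhat
    let ΦT : (Fin K → ℝ) → ℝ := fun bh =>
      xhat bh ⬝ᵥ abar.mulVec (xhat bh) + bh ⬝ᵥ xhat bh
    let ΦP : (Fin K → ℝ) → ℝ := fun bh =>
      ∑ k, ((1 / 2) * Qhat k * (ρ * xhat bh k + fhat k) ^ 2 +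
        muhat k * (ρ * xhat bh k + fhat k))
    ∀ (bh : Fin K → ℝ) (k : Fin K),
      HasDerivAt (fun t : ℝ => ΦT (Function.update bh k t))
        (xhat bh k -
          ((2 : ℝ) • abar.mulVec (xhat bh) + bh) ⬝ᵥ Bul.mulVec (Pi.single k 1)) (bh k) ∧
      HasDerivAt (fun t : ℝ => ΦP (Function.update bh k t))
        (-(ρ * (lamhat bh ⬝ᵥ Bul.mulVec (Pi.single k 1)))) (bh k) := by
  intro Γ D onesKK Bul xhat lamhat ΦT ΦP bh k
  set v := Bul *ᵥ Pi.single k 1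
  have hb : HasDerivAt (Function.update bh k) (Pi.single k 1) (bh k) := by
    simpa using hasDerivAt_update bh k (bh k)
  have hx : HasDerivAt (fun t => xhat (Function.update bh k t)) (-v) (bh k) :=
    (((hb.add_const _).add_const _).mulVec Bul).neg.add_const _
  refine ⟨?_, ?_⟩
  · have hsymm : xhat bh ⬝ᵥ abar *ᵥ v = abar *ᵥ xhat bh ⬝ᵥ v := by
      rw [dotProduct_mulVec, ← mulVec_transpose, habar]
    refine ((hx.dotProduct (hx.mulVec abar)).add (hb.dotProduct hx)).congr_deriv ?_
    simp only [Function.update_eq_self, mulVec_neg, neg_dotProduct, dotProduct_neg,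
      single_one_dotProduct, add_dotProduct, smul_dotProduct, hsymm, dotProduct_comm v]
    ring
  · refine (((hx.fun_const_smul ρ).add_const fhat).sum_half_mul_sq_add_mul Qhat muhat
      ).congr_deriv ?_
    simp only [Function.update_eq_self, dotProduct_smul, dotProduct_neg, smul_eq_mul, mul_neg]
    rfl

/-- Aggregated coupled system: partial derivatives of the transportation and power social
costs with respect to the aggregated fixed travel costs `β̂_k`:
`∂Φ_T/∂β̂_k = x̂_k − (2ᾱx̂ + β̂)ᵀ B̂_ul⁻¹ e_k` and `∂Φ_P/∂β̂_k = −ρ λ̂ᵀ B̂_ul⁻¹ e_k`. -/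
theorem ATBP_beta_derivatives {K : ℕ} (hK : 1 ≤ K)
    (abar : Matrix (Fin K) (Fin K) ℝ) (habar : abarᵀ = abar)
    (Qhat : Fin K → ℝ) (hQ : ∀ k, 0 < Qhat k)
    (ρ : ℝ) (hρ : 0 < ρ)
    (muhat fhat : Fin K → ℝ)
    (hΓ : IsUnit (abar + ρ ^ 2 • Matrix.diagonal Qhat))
    (hD : (1 : Fin K → ℝ) ⬝ᵥ (abar + ρ ^ 2 • Matrix.diagonal Qhat)⁻¹.mulVec 1 ≠ 0) :
    let Γ : Matrix (Fin K) (Fin K) ℝ := abar + ρ ^ 2 • Matrix.diagonal Qhat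
    let D : ℝ := (1 : Fin K → ℝ) ⬝ᵥ Γ⁻¹.mulVec 1
    let onesKK : Matrix (Fin K) (Fin K) ℝ := Matrix.of fun _ _ => (1 : ℝ)
    let Bul : Matrix (Fin K) (Fin K) ℝ := Γ⁻¹ - D⁻¹ • (Γ⁻¹ * onesKK * Γ⁻¹)
    let xhat : (Fin K → ℝ) → Fin K → ℝ := fun bh =>
      -(Bul.mulVec (bh + ρ • (Matrix.diagonal Qhat).mulVec fhat + ρ • muhat)) +
        D⁻¹ • Γ⁻¹.mulVec 1
    let lamhat : (Fin K → ℝ) → Fin K → ℝ := fun bh =>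
      (Matrix.diagonal Qhat).mulVec (ρ • xhat bh + fhat) + muhat
    let ΦT : (Fin K → ℝ) → ℝ := fun bh =>
      xhat bh ⬝ᵥ abar.mulVec (xhat bh) + bh ⬝ᵥ xhat bh
    let ΦP : (Fin K → ℝ) → ℝ := fun bh =>
      ∑ k, ((1 / 2) * Qhat k * (ρ * xhat bh k + fhat k) ^ 2 +
        muhat k * (ρ * xhat bh k + fhat k))
    ∀ (bh : Fin K → ℝ) (k : Fin K),
      HasDerivAt (fun t : ℝ => ΦT (Function.update bh k t))
        (xhat bh k -
          ((2 : ℝ) • abar.mulVec (xhat bh) + bh) ⬝ᵥ Bul.mulVec (Pi.single k 1)) (bh k) ∧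
      HasDerivAt (fun t : ℝ => ΦP (Function.update bh k t))
        (-(ρ * (lamhat bh ⬝ᵥ Bul.mulVec (Pi.single k 1)))) (bh k) :=
  ATBP_beta_derivatives_general abar habar Qhat ρ muhat fhat
end

section
/- (Fully congested radial case: characterization of type T-T Braess' paradox.) Fix R ≥ 2, Q ∈ ℝ^R with Q_r > 0 for all r, ρ > 0, β̂ ∈ ℝ^R with β̂ ≥ 0, and c ∈ ℝ^R. For α̂ ∈ ℝ^R with α̂_r > 0 for all r, define ω_r(α̂) := 1/(α̂_r + ρ²Q_r), ω̃_r(α̂) := ω_r/∑_s ω_s, η(α̂) := (1 + ∑_s ω_s·c_s)/(∑_s ω_s), x_r(α̂) := ω_r·(η − c_r), and Φ_T(α̂) := ∑_r x_r(α̂)·(α̂_r·x_r(α̂) + β̂_r). Fix a point α̂⁰ with all α̂⁰_r > 0 and x_r(α̂⁰) > 0 for all r, and a route r. Then the partial derivative of Φ_T with respect to α̂_r at α̂⁰ exists, equals x_r·(x_r − ψ_r) where ψ_r := ω_r·(2α̂_r·x_r + β̂_r − ∑_{r'} ω̃_{r'}·(2α̂_{r'}·x_{r'} + β̂_{r'}))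 (all evaluated at α̂⁰), and is strictly negative if and only if x_r(α̂⁰) < ψ_r(α̂⁰). That is, type T-T Braess' paradox occurs when perturbing route r if and only if x_r < ψ_r. -/
/-!
Along any differentiable curve `t ↦ a(t)` the weights `ω_s = (a_s + k_s)⁻¹` move by
`ω_s' = -ω_s² a_s'`, which makes the equilibrium price move by `η' = (∑ ω_s a_s' x_s) / ∑ ω_s`
and each flow by `x_s' = ω_s (η' - a_s' x_s)`. Substituting into
`Φ_T' = ∑ (a_s' x_s² + (2 a_s x_s + b_s) x_s')` and regrouping by `a_s'` shows that the gradient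
of `Φ_T` has components `x_s (x_s - ψ_s)`. The sign criterion then only needs `x_r > 0`.
-/

open Finset

noncomputable section

namespace FullyCongested

variable {ι : Type*}

-- `weight`, `normWeight`, `price` and `flow` are the paper's `ω`, `ω̃`, `η` and `x`,
-- with `k_s = ρ² Q_s`.
def weight (k a : ι → ℝ) (s : ι) : ℝ := (a s + k s)⁻¹

theorem hasDerivAt_weight {k : ι → ℝ} {γ : ℝ → ι → ℝ} {γ' : ι → ℝ} {t₀ : ℝ}
    (hγ : HasDerivAt γ γ' t₀) (hk : ∀ s, γ t₀ s + k s ≠ 0) (s : ι) :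
    HasDerivAt (fun t => weight k (γ t) s) (-weight k (γ t₀) s ^ 2 * γ' s) t₀ := by
  refine (((hasDerivAt_pi.1 hγ s).add_const (k s)).inv (hk s)).congr_deriv ?_
  simp only [weight]
  field_simp

variable [Fintype ι] (k c b : ι → ℝ)

def price (a : ι → ℝ) : ℝ := (1 + ∑ u, weight k a u * c u) / ∑ u, weight k a u

def flow (a : ι → ℝ) (s : ι) : ℝ := weight k a s * (price k c a - c s)

def socialCost (a : ι → ℝ) : ℝ := ∑ s, flow k c a s * (a s * flow k c a s + b s)

def marginalCost (a : ι → ℝ) (s : ι) : ℝ := 2 * a s * flow k c a s + b s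

def normWeight (a : ι → ℝ) (s : ι) : ℝ := weight k a s / ∑ u, weight k a u

def psi (a : ι → ℝ) (s : ι) : ℝ :=
  weight k a s * (marginalCost k c b a s - ∑ u, normWeight k a u * marginalCost k c b a u)

variable {k c} {γ : ℝ → ι → ℝ} {γ' : ι → ℝ} {t₀ : ℝ}

theorem hasDerivAt_price (hγ : HasDerivAt γ γ' t₀) (hk : ∀ s, γ t₀ s + k s ≠ 0)
    (hS : ∑ s, weight k (γ t₀) s ≠ 0) :
    HasDerivAt (fun t => price k c (γ t))
      ((∑ s, weight k (γ t₀) s * γ' s * flow k c (γ t₀) s) / ∑ s, weight k (γ t₀) s) t₀ := by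
  have hw := hasDerivAt_weight hγ hk
  have hS' := HasDerivAt.fun_sum fun s (_ : s ∈ univ) => hw s
  have hW' := HasDerivAt.fun_sum fun s (_ : s ∈ univ) => (hw s).mul_const (c s)
  refine ((hW'.const_add 1).fun_div hS' hS).congr_deriv ?_
  have hflow : ∑ s, weight k (γ t₀) s * γ' s * flow k c (γ t₀) s =
      price k c (γ t₀) * ∑ s, weight k (γ t₀) s ^ 2 * γ' s -
        ∑ s, weight k (γ t₀) s ^ 2 * γ' s * c s := by
    simp only [flow, mul_sum, ← sum_sub_distrib]
    exact sum_congr rfl fun s _ => by ring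
  rw [hflow, price]
  simp only [neg_mul, sum_neg_distrib]
  field_simp
  ring

theorem hasDerivAt_flow (hγ : HasDerivAt γ γ' t₀) (hk : ∀ s, γ t₀ s + k s ≠ 0)
    (hS : ∑ s, weight k (γ t₀) s ≠ 0) (s : ι) :
    HasDerivAt (fun t => flow k c (γ t) s)
      (weight k (γ t₀) s *
        ((∑ u, weight k (γ t₀) u * γ' u * flow k c (γ t₀) u) / ∑ u, weight k (γ t₀) u -
          γ' s * flow k c (γ t₀) s)) t₀ := by
  have hη := (hasDerivAt_price (c := c) hγ hk hS).sub_const (c s)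
  refine ((hasDerivAt_weight hγ hk s).mul hη).congr_deriv ?_
  simp only [flow]
  ring

theorem hasDerivAt_socialCost (hγ : HasDerivAt γ γ' t₀) (hk : ∀ s, γ t₀ s + k s ≠ 0)
    (hS : ∑ s, weight k (γ t₀) s ≠ 0) :
    HasDerivAt (fun t => socialCost k c b (γ t))
      (∑ s, γ' s * (flow k c (γ t₀) s * (flow k c (γ t₀) s - psi k c b (γ t₀) s))) t₀ := by
  set ω := weight k (γ t₀)
  set x := flow k c (γ t₀)
  set g := marginalCost k c b (γ t₀)
  set D := (∑ u, ω u * γ' u * x u) / ∑ u, ω u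
  set M := ∑ u, normWeight k (γ t₀) u * g u
  have hM : M = (∑ u, ω u * g u) / ∑ u, ω u := by
    simp only [M, normWeight, sum_div]
    exact sum_congr rfl fun u _ => by ring
  have hx := hasDerivAt_flow (c := c) hγ hk hS
  have hΦ := HasDerivAt.fun_sum fun s (_ : s ∈ univ) =>
    (hx s).mul (((hasDerivAt_pi.1 hγ s).mul (hx s)).add_const (b s))
  refine hΦ.congr_deriv ?_
  calc ∑ s, (ω s * (D - γ' s * x s) * (γ t₀ s * x s + b s) +
          x s * (γ' s * x s + γ t₀ s * (ω s * (D - γ' s * x s))))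
      = ∑ s, γ' s * x s * (x s - ω s * g s) + D * ∑ s, ω s * g s := by
        rw [mul_sum, ← sum_add_distrib]
        refine sum_congr rfl fun s _ => ?_
        simp only [g, marginalCost]
        ring
    _ = ∑ s, (γ' s * x s * (x s - ω s * g s) + ω s * γ' s * x s * M) := by
        rw [sum_add_distrib, ← sum_mul, hM]
        ring
    _ = ∑ s, γ' s * (x s * (x s - psi k c b (γ t₀) s)) :=
        sum_congr rfl fun s _ => by
          simp only [psi]
          ring

end FullyCongested

end

open FullyCongested in
theorem TT_fully_congested_general {R : ℕ}
    (Q : Fin R → ℝ) (hQ : ∀ r, 0 < Q r) (ρ : ℝ)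
    (bhat : Fin R → ℝ) (c : Fin R → ℝ)
    (a0 : Fin R → ℝ) (ha0 : ∀ r, 0 < a0 r) (r : Fin R) :
    let ω : (Fin R → ℝ) → Fin R → ℝ := fun a s => (a s + ρ ^ 2 * Q s)⁻¹
    let ωt : (Fin R → ℝ) → Fin R → ℝ := fun a s => ω a s / ∑ u, ω a u
    let η : (Fin R → ℝ) → ℝ := fun a => (1 + ∑ u, ω a u * c u) / ∑ u, ω a u
    let x : (Fin R → ℝ) → Fin R → ℝ := fun a s => ω a s * (η a - c s)
    let ΦT : (Fin R → ℝ) → ℝ := fun a => ∑ s, x a s * (a s * x a s + bhat s)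
    let ψ : (Fin R → ℝ) → Fin R → ℝ := fun a s =>
      ω a s * (2 * a s * x a s + bhat s - ∑ u, ωt a u * (2 * a u * x a u + bhat u))
    (∀ s, 0 < x a0 s) →
      HasDerivAt (fun t : ℝ => ΦT (Function.update a0 r t))
        (x a0 r * (x a0 r - ψ a0 r)) (a0 r) ∧
      (x a0 r * (x a0 r - ψ a0 r) < 0 ↔ x a0 r < ψ a0 r) := by
  intro ω ωt η x ΦT ψ hx
  set k : Fin R → ℝ := fun s => ρ ^ 2 * Q s
  have hk : ∀ s, 0 < a0 s + k s := fun s =>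
    add_pos_of_pos_of_nonneg (ha0 s) (mul_nonneg (sq_nonneg ρ) (hQ s).le)
  have hS : 0 < ∑ s, weight k a0 s := sum_pos (fun s _ => inv_pos.2 (hk s)) ⟨r, mem_univ r⟩
  refine ⟨?_, ?_⟩
  · have h := hasDerivAt_socialCost bhat (c := c) (hasDerivAt_update a0 r (a0 r))
      (by simpa using fun s => (hk s).ne') (by simpa using hS.ne')
    simp only [Function.update_eq_self, Pi.single_apply, ite_mul, one_mul, zero_mul,
      sum_ite_eq', mem_univ, if_true] at h
    exact h
  · exact (smul_neg_iff_of_pos_left (hx r)).trans sub_neg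

/-- Fully congested radial power network with non-overlapping active routes:
the partial derivative of the transportation social cost with respect to `α̂_r` equals
`x_r (x_r − ψ_r)`, and it is strictly negative (type T-T Braess' paradox when perturbing
route `r`) iff `x_r < ψ_r`. -/
theorem TT_fully_congested {R : ℕ} (hR : 2 ≤ R)
    (Q : Fin R → ℝ) (hQ : ∀ r, 0 < Q r) (ρ : ℝ) (hρ : 0 < ρ)
    (bhat : Fin R → ℝ) (hb : ∀ r, 0 ≤ bhat r) (c : Fin R → ℝ)
    (a0 : Fin R → ℝ) (ha0 : ∀ r, 0 < a0 r) (r : Fin R) :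
    let ω : (Fin R → ℝ) → Fin R → ℝ := fun a s => (a s + ρ ^ 2 * Q s)⁻¹
    let ωt : (Fin R → ℝ) → Fin R → ℝ := fun a s => ω a s / ∑ u, ω a u
    let η : (Fin R → ℝ) → ℝ := fun a => (1 + ∑ u, ω a u * c u) / ∑ u, ω a u
    let x : (Fin R → ℝ) → Fin R → ℝ := fun a s => ω a s * (η a - c s)
    let ΦT : (Fin R → ℝ) → ℝ := fun a => ∑ s, x a s * (a s * x a s + bhat s)
    let ψ : (Fin R → ℝ) → Fin R → ℝ := fun a s =>
      ω a s * (2 * a s * x a s + bhat s - ∑ u, ωt a u * (2 * a u * x a u + bhat u))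
    (∀ s, 0 < x a0 s) →
      HasDerivAt (fun t : ℝ => ΦT (Function.update a0 r t))
        (x a0 r * (x a0 r - ψ a0 r)) (a0 r) ∧
      (x a0 r * (x a0 r - ψ a0 r) < 0 ↔ x a0 r < ψ a0 r) :=
  TT_fully_congested_general Q hQ ρ bhat c a0 ha0 r
end

section
/- (Fully congested radial case: characterization of type T-P Braess' paradox.) Fix R ≥ 2, Q ∈ ℝ^R with Q_r > 0 for all r, ρ > 0, β̂ ∈ ℝ^R with β̂ ≥ 0, μ ∈ ℝ^R, f̂ ∈ ℝ^R, and set c_r := β̂_r + ρ·Q_r·f̂_r + ρ·μ_r. For α̂ ∈ ℝ^R with α̂_r > 0 for all r, define ω_r(α̂) := 1/(α̂_r + ρ²Q_r), ω̃_r(α̂) := ω_r/∑_s ω_s, η(α̂) := (1 + ∑_s ω_s·c_s)/(∑_s ω_s), x_r(α̂) := ω_r·(η − c_r), λ_r(α̂) := Q_r·(ρ·x_r(α̂) + f̂_r) + μ_r, and Φ_P(α̂) := ∑_r [ (1/2)·Q_r·(ρ·x_r(α̂) + f̂_r)² + μ_r·(ρ·x_r(α̂) + f̂_r) ]. Fix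 a point α̂⁰ with all α̂⁰_r > 0 and x_r(α̂⁰) > 0 for all r, and a route r. Then the partial derivative of Φ_P with respect to α̂_r at α̂⁰ exists, equals −ρ·x_r·ω_r·∑_{r'} ω̃_{r'}·(λ_r − λ_{r'}) (evaluated at α̂⁰), and is strictly negative if and only if ∑_{r'} ω̃_{r'}(α̂⁰)·(λ_r(α̂⁰) − λ_{r'}(α̂⁰)) > 0. That is, type T-P Braess' paradox occurs when perturbing route r if and only if ∑_{r'} ω̃_{r'}·(λ_r − λ_{r'}) > 0. -/
/-!
For weights `w_s = 1 / (α̂_s + ρ² Q_s)` the congested equilibrium is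
`η = (1 + ∑ w_u c_u) / ∑ w_u`, `x_s = w_s (η - c_s)`. Raising `α̂_r` only moves `w_r`,
with `w_r' = -w_r²`; the quotient rule gives `η' = w_r x_r / ∑ w_u`, hence
`x_s' = w_r x_r (w̃_s - δ_{sr})`. Since `Φ_P = ∑ φ_s(ρ x_s + f̂_s)` with `φ_s' = λ_s`, the chain
rule gives `Φ_P' = ρ w_r x_r (∑ w̃_s λ_s - λ_r)`, which is the claimed formula because
`∑ w̃_s = 1`. As `ρ w_r x_r > 0`, its sign is that of `-∑ w̃_u (λ_r - λ_u)`.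
-/

open Finset

theorem hasDerivAt_inv_update_add {ι : Type*} [DecidableEq ι] (a k : ι → ℝ) (r : ι)
    (h : a r + k r ≠ 0) (s : ι) :
    HasDerivAt (fun t => (Function.update a r t s + k s)⁻¹)
      ((Pi.single r (-((a r + k r)⁻¹ ^ 2)) : ι → ℝ) s) (a r) := by
  rcases eq_or_ne s r with rfl | hs
  · simp only [Function.update_self, Pi.single_eq_same]
    have hshift : HasDerivAt (fun t => t + k s) 1 (a s) := (hasDerivAt_id _).add_const _
    exact (hshift.fun_inv h).congr_deriv (by field_simp)
  · simp only [Function.update_of_ne hs, Pi.single_eq_of_ne hs]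
    exact hasDerivAt_const _ _

section

variable {ι : Type*} [Fintype ι]

/-- The common route cost `η` solving `x_s / w_s + c_s = η`, `∑ x_s = 1`. -/
noncomputable def equilibriumCost (c w : ι → ℝ) : ℝ := (1 + ∑ u, w u * c u) / ∑ u, w u

noncomputable def equilibriumFlow (c w : ι → ℝ) (s : ι) : ℝ := w s * (equilibriumCost c w - c s)

theorem hasDerivAt_equilibriumCost (c : ι → ℝ) {w : ℝ → ι → ℝ} {w' : ι → ℝ} {t₀ : ℝ}
    (hw : ∀ u, HasDerivAt (fun t => w t u) (w' u) t₀) (hW : ∑ u, w t₀ u ≠ 0) :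
    HasDerivAt (fun t => equilibriumCost c (w t))
      (-(∑ u, w' u * (equilibriumCost c (w t₀) - c u)) / ∑ u, w t₀ u) t₀ := by
  have hsum := HasDerivAt.fun_sum fun u (_ : u ∈ univ) => hw u
  have hwsum := HasDerivAt.fun_sum fun u (_ : u ∈ univ) => (hw u).mul_const (c u)
  refine ((hwsum.const_add 1).fun_div hsum hW).congr_deriv ?_
  simp only [equilibriumCost, mul_sub, sum_sub_distrib, ← sum_mul]
  field_simp
  ring

theorem hasDerivAt_equilibriumFlow_of_single [DecidableEq ι] (c : ι → ℝ) {w : ℝ → ι → ℝ}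
    {t₀ d : ℝ} {r : ι} (hw : ∀ u, HasDerivAt (fun t => w t u) ((Pi.single r d : ι → ℝ) u) t₀)
    (hW : ∑ u, w t₀ u ≠ 0) (s : ι) :
    HasDerivAt (fun t => equilibriumFlow c (w t) s)
      (d * (equilibriumCost c (w t₀) - c r) *
        ((Pi.single r 1 : ι → ℝ) s - w t₀ s / ∑ u, w t₀ u)) t₀ := by
  have hcost := hasDerivAt_equilibriumCost c hw hW
  simp only [Pi.single_apply, ite_mul, zero_mul, sum_ite_eq', mem_univ, if_true] at hcost
  refine ((hw s).mul (hcost.sub_const (c s))).congr_deriv ?_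
  rcases eq_or_ne s r with rfl | hs
  · simp only [Pi.single_eq_same]
    field_simp
    ring
  · simp only [Pi.single_eq_of_ne hs]
    field_simp
    ring

theorem hasDerivAt_sum_quadratic (Q μ : ι → ℝ) {y : ℝ → ι → ℝ} {y' : ι → ℝ} {t₀ : ℝ}
    (hy : ∀ s, HasDerivAt (fun t => y t s) (y' s) t₀) :
    HasDerivAt (fun t => ∑ s, (1 / 2 * Q s * y t s ^ 2 + μ s * y t s))
      (∑ s, (Q s * y t₀ s + μ s) * y' s) t₀ := by
  refine (HasDerivAt.fun_sum fun s (_ : s ∈ univ) =>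
    (((hy s).fun_pow 2).const_mul _).fun_add ((hy s).const_mul (μ s))).congr_deriv ?_
  refine sum_congr rfl fun s _ => ?_
  push_cast
  ring

theorem sum_mul_single_sub [DecidableEq ι] (lam v : ι → ℝ) (hv : ∑ u, v u = 1) (r : ι) :
    ∑ s, lam s * ((Pi.single r 1 : ι → ℝ) s - v s) = ∑ u, v u * (lam r - lam u) := by
  simp only [mul_sub, sum_sub_distrib, ← sum_mul, hv, one_mul]
  simp [Pi.single_apply, mul_comm]

end

theorem TP_fully_congested_general {R : ℕ}
    (Q : Fin R → ℝ) (hQ : ∀ r, 0 < Q r) (ρ : ℝ) (hρ : 0 < ρ)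
    (bhat : Fin R → ℝ)
    (μ fhat : Fin R → ℝ)
    (a0 : Fin R → ℝ) (ha0 : ∀ r, 0 < a0 r) (r : Fin R) :
    let c : Fin R → ℝ := fun s => bhat s + ρ * Q s * fhat s + ρ * μ s
    let ω : (Fin R → ℝ) → Fin R → ℝ := fun a s => (a s + ρ ^ 2 * Q s)⁻¹
    let ωt : (Fin R → ℝ) → Fin R → ℝ := fun a s => ω a s / ∑ u, ω a u
    let η : (Fin R → ℝ) → ℝ := fun a => (1 + ∑ u, ω a u * c u) / ∑ u, ω a u
    let x : (Fin R → ℝ) → Fin R → ℝ := fun a s => ω a s * (η a - c s)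
    let lam : (Fin R → ℝ) → Fin R → ℝ := fun a s => Q s * (ρ * x a s + fhat s) + μ s
    let ΦP : (Fin R → ℝ) → ℝ := fun a =>
      ∑ s, ((1 / 2) * Q s * (ρ * x a s + fhat s) ^ 2 + μ s * (ρ * x a s + fhat s))
    (∀ s, 0 < x a0 s) →
      HasDerivAt (fun t : ℝ => ΦP (Function.update a0 r t))
        (-(ρ * x a0 r * ω a0 r * ∑ u, ωt a0 u * (lam a0 r - lam a0 u))) (a0 r) ∧
      (-(ρ * x a0 r * ω a0 r * ∑ u, ωt a0 u * (lam a0 r - lam a0 u)) < 0 ↔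
        0 < ∑ u, ωt a0 u * (lam a0 r - lam a0 u)) := by
  intro c ω ωt η x lam ΦP hx
  have hden : ∀ s, 0 < a0 s + ρ ^ 2 * Q s := fun s => by have := ha0 s; have := hQ s; positivity
  have hω : ∀ s, 0 < ω a0 s := fun s => inv_pos.mpr (hden s)
  have hW : ∑ u, ω a0 u ≠ 0 := (sum_pos (fun s _ => hω s) ⟨r, mem_univ r⟩).ne'
  have hflow := hasDerivAt_equilibriumFlow_of_single c
    (hasDerivAt_inv_update_add a0 (fun s => ρ ^ 2 * Q s) r (hden r).ne') (by simpa using hW)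
  have hΦ := hasDerivAt_sum_quadratic Q μ fun s => ((hflow s).const_mul ρ).add_const (fhat s)
  simp only [Function.update_eq_self] at hΦ
  refine ⟨hΦ.congr_deriv ?_, ?_⟩
  · have hωt : ∑ u, ωt a0 u = 1 := by simp only [ωt, ← sum_div]; exact div_self hW
    show ∑ s, lam a0 s * (ρ * (-ω a0 r ^ 2 * (η a0 - c r) *
      ((Pi.single r 1 : Fin R → ℝ) s - ωt a0 s))) = _
    rw [← sum_mul_single_sub (lam a0) (ωt a0) hωt r, mul_sum, ← sum_neg_distrib]
    exact sum_congr rfl fun s _ => by simp only [x]; ring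
  · rw [neg_lt_zero]
    exact mul_pos_iff_of_pos_left (by have := hx r; have := hω r; positivity)

/-- Fully congested radial power network with non-overlapping active routes:
the partial derivative of the power system social cost with respect to `α̂_r` equals
`−ρ x_r ω_r ∑_{r'} ω̃_{r'} (λ_r − λ_{r'})`, and it is strictly negative (type T-P Braess'
paradox when perturbing route `r`) iff `∑_{r'} ω̃_{r'} (λ_r − λ_{r'}) > 0`. -/
theorem TP_fully_congested {R : ℕ} (hR : 2 ≤ R)
    (Q : Fin R → ℝ) (hQ : ∀ r, 0 < Q r) (ρ : ℝ) (hρ : 0 < ρ)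
    (bhat : Fin R → ℝ) (hb : ∀ r, 0 ≤ bhat r)
    (μ fhat : Fin R → ℝ)
    (a0 : Fin R → ℝ) (ha0 : ∀ r, 0 < a0 r) (r : Fin R) :
    let c : Fin R → ℝ := fun s => bhat s + ρ * Q s * fhat s + ρ * μ s
    let ω : (Fin R → ℝ) → Fin R → ℝ := fun a s => (a s + ρ ^ 2 * Q s)⁻¹
    let ωt : (Fin R → ℝ) → Fin R → ℝ := fun a s => ω a s / ∑ u, ω a u
    let η : (Fin R → ℝ) → ℝ := fun a => (1 + ∑ u, ω a u * c u) / ∑ u, ω a u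
    let x : (Fin R → ℝ) → Fin R → ℝ := fun a s => ω a s * (η a - c s)
    let lam : (Fin R → ℝ) → Fin R → ℝ := fun a s => Q s * (ρ * x a s + fhat s) + μ s
    let ΦP : (Fin R → ℝ) → ℝ := fun a =>
      ∑ s, ((1 / 2) * Q s * (ρ * x a s + fhat s) ^ 2 + μ s * (ρ * x a s + fhat s))
    (∀ s, 0 < x a0 s) →
      HasDerivAt (fun t : ℝ => ΦP (Function.update a0 r t))
        (-(ρ * x a0 r * ω a0 r * ∑ u, ωt a0 u * (lam a0 r - lam a0 u))) (a0 r) ∧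
      (-(ρ * x a0 r * ω a0 r * ∑ u, ωt a0 u * (lam a0 r - lam a0 u)) < 0 ↔
        0 < ∑ u, ωt a0 u * (lam a0 r - lam a0 u)) :=
  TP_fully_congested_general Q hQ ρ hρ bhat μ fhat a0 ha0 r
end

section
/- (Convex combinations of user equilibria with the same support.) Let A ∈ ℝ^{m×n}, α ∈ ℝ^m with α ≥ 0 componentwise, β ∈ ℝ^m, and for Π ∈ ℝ^n define f_Π(x) := (1/2)·xᵀAᵀdiag(α)Ax + (Aᵀβ + Π)ᵀx on the simplex Δ := {x ∈ ℝ^n : x ≥ 0, 1ᵀx = 1}. Suppose x₁ minimizes f_{Π₁} over Δ, x₂ minimizes f_{Π₂} over Δ, and {r : (x₁)_r = 0} = {r : (x₂)_r = 0}. Then for every t ∈ [0,1], the point x_t := t·x₁ + (1−t)·x₂ minimizes f_{Π_t} over Δ, where Π_t := t·Π₁ + (1−t)·Π₂. If moreover Aᵀdiag(α)A is positive definite, then x_t is the unique minimizer of f_{Π_t} over Δ. -/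
/-!
A point `x` of the simplex minimizes the convex quadratic `f_Π` exactly when the gradient
`g = Qx + Aᵀβ + Π` (with `Q = Aᵀ diag(α) A`) attains its least coordinate at every route used
by `x`. The gradient is jointly affine in `(x, Π)`, so if `x₁` and `x₂` use the same routes, the
averaged gradient is still minimal on the (common) support of the averaged point, which is
therefore a minimizer. Positive definiteness makes `f_Π` strictly convex, whence uniqueness.
-/

open Matrix

section QuadraticProgram

variable {ι : Type*} [Fintype ι] {Q : Matrix ι ι ℝ} {c x y : ι → ℝ} {s : Set (ι → ℝ)}

noncomputable def quadObjective (Q : Matrix ι ι ℝ) (c x : ι → ℝ) : ℝ :=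
  1 / 2 * (x ⬝ᵥ Q *ᵥ x) + c ⬝ᵥ x

def quadGradient (Q : Matrix ι ι ℝ) (c x : ι → ℝ) : ι → ℝ :=
  Q *ᵥ x + c

lemma Matrix.IsSymm.dotProduct_mulVec_comm (hQ : Q.IsSymm) (x y : ι → ℝ) :
    x ⬝ᵥ Q *ᵥ y = y ⬝ᵥ Q *ᵥ x := by
  rw [dotProduct_mulVec, dotProduct_comm, ← vecMul_transpose, hQ.eq]

lemma quadObjective_add_smul (hQ : Q.IsSymm) (c x d : ι → ℝ) (t : ℝ) :
    quadObjective Q c (x + t • d) =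
      quadObjective Q c x + t * (quadGradient Q c x ⬝ᵥ d) + t ^ 2 / 2 * (d ⬝ᵥ Q *ᵥ d) := by
  have hcross : Q *ᵥ x ⬝ᵥ d = d ⬝ᵥ Q *ᵥ x := dotProduct_comm _ _
  simp only [quadObjective, quadGradient, mulVec_add, mulVec_smul, dotProduct_add,
    add_dotProduct, dotProduct_smul, smul_dotProduct, smul_eq_mul, hcross,
    hQ.dotProduct_mulVec_comm x d]
  ring

open Filter Topology in
lemma nonneg_of_forall_add_mul_nonneg {a b : ℝ} (h : ∀ t : ℝ, 0 < t → t ≤ 1 → 0 ≤ a + b * t) :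
    0 ≤ a := by
  have hcont : Continuous fun t : ℝ => a + b * t := by fun_prop
  refine ge_of_tendsto ((hcont.tendsto' 0 a (by simp)).mono_left
    (nhdsWithin_le_nhds (s := Set.Ioi 0))) ?_
  filter_upwards [Ioo_mem_nhdsGT (zero_lt_one' ℝ)] with t ht
  exact h t ht.1 ht.2.le

theorem IsMinOn.quadGradient_dotProduct_le (hmin : IsMinOn (quadObjective Q c) s x)
    (hQ : Q.IsSymm) (hs : Convex ℝ s) (hx : x ∈ s) (hy : y ∈ s) :
    quadGradient Q c x ⬝ᵥ x ≤ quadGradient Q c x ⬝ᵥ y := by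
  rw [← sub_nonneg, ← dotProduct_sub]
  refine nonneg_of_forall_add_mul_nonneg (b := (y - x) ⬝ᵥ Q *ᵥ (y - x) / 2) fun t ht ht1 => ?_
  have hle := isMinOn_iff.1 hmin _ (hs.add_smul_sub_mem hx hy ⟨ht.le, ht1⟩)
  rw [quadObjective_add_smul hQ] at hle
  nlinarith

theorem isMinOn_quadObjective_of_forall_dotProduct_le (hQ : Q.PosSemidef)
    (h : ∀ y ∈ s, quadGradient Q c x ⬝ᵥ x ≤ quadGradient Q c x ⬝ᵥ y) :
    IsMinOn (quadObjective Q c) s x := by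
  refine isMinOn_iff.2 fun y hy => ?_
  have hexp := quadObjective_add_smul (isHermitian_iff_isSymm.1 hQ.1) c x (y - x) 1
  have hcurv : 0 ≤ (y - x) ⬝ᵥ Q *ᵥ (y - x) := by
    simpa using hQ.dotProduct_mulVec_nonneg (y - x)
  rw [one_smul, add_sub_cancel, dotProduct_sub] at hexp
  nlinarith [h y hy]

theorem eq_of_isMinOn_quadObjective (hQ : Q.PosDef) (hs : Convex ℝ s) (hx : x ∈ s) (hy : y ∈ s)
    (hminx : IsMinOn (quadObjective Q c) s x) (hminy : IsMinOn (quadObjective Q c) s y) :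
    x = y := by
  have hsymm := isHermitian_iff_isSymm.1 hQ.1
  have hexp := quadObjective_add_smul hsymm c y (x - y) 1
  rw [one_smul, add_sub_cancel, dotProduct_sub] at hexp
  have hvi := hminy.quadGradient_dotProduct_le hsymm hs hy hx
  have hle := isMinOn_iff.1 hminx y hy
  by_contra hne
  have hcurv : 0 < (x - y) ⬝ᵥ Q *ᵥ (x - y) := by
    simpa using hQ.dotProduct_mulVec_pos (sub_ne_zero.2 hne)
  nlinarith

lemma quadGradient_convex_combination (Q : Matrix ι ι ℝ)
    (b P₁ P₂ x₁ x₂ : ι → ℝ) (t : ℝ) :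
    quadGradient Q (b + (t • P₁ + (1 - t) • P₂)) (t • x₁ + (1 - t) • x₂) =
      t • quadGradient Q (b + P₁) x₁ + (1 - t) • quadGradient Q (b + P₂) x₂ := by
  ext r
  simp only [quadGradient, mulVec_add, mulVec_smul, Pi.add_apply, Pi.smul_apply, smul_eq_mul]
  ring

end QuadraticProgram

section Simplex

variable {ι : Type*}

/-- Complementary slackness for minimizing `y ↦ g ⬝ᵥ y` over the simplex. -/
def SupportInArgmin (x g : ι → ℝ) : Prop :=
  ∀ r, x r ≠ 0 → ∀ s, g r ≤ g s

theorem forall_dotProduct_le_iff_supportInArgmin [Fintype ι] [DecidableEq ι] {x g : ι → ℝ}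
    (hx : x ∈ stdSimplex ℝ ι) :
    (∀ y ∈ stdSimplex ℝ ι, g ⬝ᵥ x ≤ g ⬝ᵥ y) ↔ SupportInArgmin x g := by
  constructor
  · intro h r hr s
    have hvertex : ∀ s, g ⬝ᵥ x ≤ g s := fun s => by
      simpa using h _ (single_mem_stdSimplex ℝ s)
    have hslack : ∑ i, x i * (g i - g ⬝ᵥ x) = 0 := by
      simp only [mul_sub, Finset.sum_sub_distrib, ← Finset.sum_mul, hx.2, one_mul]
      rw [dotProduct_comm, dotProduct, sub_self]
    have hterm := (Finset.sum_eq_zero_iff_of_nonneg fun i _ =>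
      mul_nonneg (hx.1 i) (sub_nonneg.2 (hvertex i))).1 hslack r (Finset.mem_univ r)
    have hgr := (mul_eq_zero.1 hterm).resolve_left hr
    linarith [hvertex s, sub_eq_zero.1 hgr]
  · intro h y hy
    calc g ⬝ᵥ x = ∑ r, ∑ s, x r * y s * g r := by
          simp only [mul_right_comm (x _) (y _), ← Finset.mul_sum, hy.2, mul_one, dotProduct,
            mul_comm (g _)]
      _ ≤ ∑ r, ∑ s, x r * y s * g s := by
          refine Finset.sum_le_sum fun r _ => Finset.sum_le_sum fun s _ => ?_
          by_cases hr : x r = 0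
          · simp [hr]
          · exact mul_le_mul_of_nonneg_left (h r hr s) (mul_nonneg (hx.1 r) (hy.1 s))
      _ = g ⬝ᵥ y := by
          rw [Finset.sum_comm]
          simp only [mul_assoc, ← Finset.sum_mul, hx.2, one_mul, dotProduct, mul_comm (g _)]

theorem SupportInArgmin.add {x₁ x₂ g₁ g₂ : ι → ℝ} (h₁ : SupportInArgmin x₁ g₁)
    (h₂ : SupportInArgmin x₂ g₂) (hsupp : ∀ r, x₁ r = 0 ↔ x₂ r = 0) {a b : ℝ} (ha : 0 ≤ a)
    (hb : 0 ≤ b) : SupportInArgmin (a • x₁ + b • x₂) (a • g₁ + b • g₂) := by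
  intro r hr s
  have hr₁ : x₁ r ≠ 0 := fun h0 => hr (by simp [h0, (hsupp r).1 h0])
  have hr₂ : x₂ r ≠ 0 := fun h0 => hr₁ ((hsupp r).2 h0)
  simp only [Pi.add_apply, Pi.smul_apply, smul_eq_mul]
  gcongr
  exacts [h₁ r hr₁ s, h₂ r hr₂ s]

end Simplex

/-- Convex combinations of user equilibria with the same support: if `x₁` minimizes
`f_{P₁}` and `x₂` minimizes `f_{P₂}` over the simplex and they have the same set of zero
coordinates, then `t x₁ + (1−t) x₂` minimizes `f_{t P₁ + (1−t) P₂}`; it is moreover the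
unique minimizer when `Aᵀ diag(α) A` is positive definite. -/
theorem UE_convex_combination {m n : ℕ}
    (A : Matrix (Fin m) (Fin n) ℝ)
    (α : Fin m → ℝ) (hα : ∀ i, 0 ≤ α i) (β : Fin m → ℝ)
    (P₁ P₂ : Fin n → ℝ) (x₁ x₂ : Fin n → ℝ) :
    let f : (Fin n → ℝ) → (Fin n → ℝ) → ℝ := fun P x =>
      (1 / 2) * (x ⬝ᵥ (Aᵀ * Matrix.diagonal α * A).mulVec x) + (Aᵀ.mulVec β + P) ⬝ᵥ x
    let simplex : (Fin n → ℝ) → Prop := fun x => (∀ r, 0 ≤ x r) ∧ (∑ r, x r) = 1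
    simplex x₁ → (∀ y, simplex y → f P₁ x₁ ≤ f P₁ y) →
    simplex x₂ → (∀ y, simplex y → f P₂ x₂ ≤ f P₂ y) →
    (∀ r, x₁ r = 0 ↔ x₂ r = 0) →
    ∀ t : ℝ, 0 ≤ t → t ≤ 1 →
      (simplex (t • x₁ + (1 - t) • x₂) ∧
        (∀ y, simplex y →
          f (t • P₁ + (1 - t) • P₂) (t • x₁ + (1 - t) • x₂) ≤
            f (t • P₁ + (1 - t) • P₂) y)) ∧
      ((Aᵀ * Matrix.diagonal α * A).PosDef →
        ∀ y, simplex y →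
          (∀ z, simplex z → f (t • P₁ + (1 - t) • P₂) y ≤ f (t • P₁ + (1 - t) • P₂) z) →
          y = t • x₁ + (1 - t) • x₂) := by
  intro f simplex hx₁ hmin₁ hx₂ hmin₂ hsupp t ht0 ht1
  set Q := Aᵀ * diagonal α * A
  have hQ : Q.PosSemidef := by
    simpa [conjTranspose_eq_transpose_of_trivial] using
      (PosSemidef.diagonal (show 0 ≤ α from hα)).conjTranspose_mul_mul_same A
  have hΔ : Convex ℝ (stdSimplex ℝ (Fin n)) := convex_stdSimplex ℝ _
  have hargmin : ∀ {P x}, x ∈ stdSimplex ℝ (Fin n) → (∀ y, simplex y → f P x ≤ f P y) →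
      SupportInArgmin x (quadGradient Q (Aᵀ *ᵥ β + P) x) := fun hx hmin =>
    (forall_dotProduct_le_iff_supportInArgmin hx).1 fun _ hy =>
      (isMinOn_iff.2 hmin).quadGradient_dotProduct_le (isHermitian_iff_isSymm.1 hQ.1) hΔ hx hy
  have hxt : t • x₁ + (1 - t) • x₂ ∈ stdSimplex ℝ (Fin n) :=
    hΔ hx₁ hx₂ ht0 (sub_nonneg.2 ht1) (add_sub_cancel t 1)
  have hmint : IsMinOn (quadObjective Q (Aᵀ *ᵥ β + (t • P₁ + (1 - t) • P₂)))
      (stdSimplex ℝ (Fin n)) (t • x₁ + (1 - t) • x₂) := by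
    refine isMinOn_quadObjective_of_forall_dotProduct_le hQ
      ((forall_dotProduct_le_iff_supportInArgmin hxt).2 ?_)
    rw [quadGradient_convex_combination]
    exact (hargmin hx₁ hmin₁).add (hargmin hx₂ hmin₂) hsupp ht0 (sub_nonneg.2 ht1)
  exact ⟨⟨hxt, isMinOn_iff.1 hmint⟩, fun hpd y hy hminy =>
    eq_of_isMinOn_quadObjective hpd hΔ hy hxt (isMinOn_iff.2 hminy) hmint⟩
end

section
/- (System-optimal transportation charging pricing.) Let A ∈ ℝ^{m×n} with entries in {0,1}, α ∈ ℝ^m with α ≥ 0 componentwise, β ∈ ℝ^m, and define the transportation social cost Φ_T(x) := (Ax)ᵀdiag(α)(Ax) + βᵀAx and the marginal-cost charging price vector Π_T(x) := Aᵀdiag(α)Ax. Then an admissible travel pattern x* (x* ≥ 0, 1ᵀx* = 1) satisfies the equilibrium condition for the total per-route cost Aᵀ(diag(α)Ax* + β) + Π_T(x*) — namely, for every route r with x*_r > 0 and every route r', the r-th component of this vector is at most the r'-th component — if and only if x* is a global minimizer of Φ_T over Δ := {x ∈ ℝ^n : x ≥ 0, 1ᵀx = 1}. In particular, the user equilibrium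 induced by the pricing policy Π_T attains the minimal transportation social cost among all admissible travel patterns. -/
open Matrix

/-- System-optimal transportation charging pricing: under the marginal-cost pricing
`Π_T(x) = Aᵀ diag(α) A x`, an admissible travel pattern satisfies the Wardrop equilibrium
condition for the total per-route cost `Aᵀ(diag(α)Ax + β) + Π_T(x)` iff it globally
minimizes the transportation social cost `Φ_T(x) = (Ax)ᵀdiag(α)(Ax) + βᵀAx` over the
simplex. -/
theorem system_optimal_transport_pricing {m n : ℕ}
    (A : Matrix (Fin m) (Fin n) ℝ) (hA : ∀ i j, A i j = 0 ∨ A i j = 1)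
    (α : Fin m → ℝ) (hα : ∀ i, 0 ≤ α i) (β : Fin m → ℝ)
    (xs : Fin n → ℝ) (hx_nonneg : ∀ r, 0 ≤ xs r) (hx_sum : ∑ r, xs r = 1) :
    let ΦT : (Fin n → ℝ) → ℝ := fun x =>
      A.mulVec x ⬝ᵥ (Matrix.diagonal α).mulVec (A.mulVec x) + β ⬝ᵥ A.mulVec x
    let cvec : (Fin n → ℝ) → Fin n → ℝ := fun x =>
      Aᵀ.mulVec ((Matrix.diagonal α).mulVec (A.mulVec x) + β) +
        (Aᵀ * Matrix.diagonal α * A).mulVec x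
    (∀ r r', 0 < xs r → cvec xs r ≤ cvec xs r') ↔
      ∀ x : Fin n → ℝ, (∀ r, 0 ≤ x r) → (∑ r, x r) = 1 → ΦT xs ≤ ΦT x := by
  intro ΦT cvec
  set D := Matrix.diagonal α with hDdef
  -- positive semidefiniteness of D
  have hpsd : ∀ v : Fin m → ℝ, 0 ≤ v ⬝ᵥ D.mulVec v := by
    intro v
    simp only [hDdef, dotProduct, Matrix.mulVec_diagonal]
    exact Finset.sum_nonneg fun i _ => by nlinarith [hα i, sq_nonneg (v i)]
  -- symmetry of D quadratic form
  have hsym : ∀ u v : Fin m → ℝ, u ⬝ᵥ D.mulVec v = v ⬝ᵥ D.mulVec u := by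
    intro u v
    simp only [hDdef, dotProduct, Matrix.mulVec_diagonal]
    exact Finset.sum_congr rfl fun i _ => by ring
  -- transpose adjoint identity
  have htr : ∀ (z : Fin m → ℝ) (d : Fin n → ℝ),
      Aᵀ.mulVec z ⬝ᵥ d = z ⬝ᵥ A.mulVec d := by
    intro z d
    rw [Matrix.mulVec_transpose, Matrix.dotProduct_mulVec]
  -- key Taylor identity
  have key : ∀ x : Fin n → ℝ,
      ΦT x = ΦT xs + cvec xs ⬝ᵥ (x - xs)
        + (A.mulVec (x - xs)) ⬝ᵥ D.mulVec (A.mulVec (x - xs)) := by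
    intro x
    have hx : x = xs + (x - xs) := by funext j; simp
    simp only [ΦT, cvec, ← hDdef]
    rw [hx]
    set d := x - xs with hd
    have hmm : (Aᵀ * D * A).mulVec (xs) = Aᵀ.mulVec (D.mulVec (A.mulVec xs)) := by
      rw [← Matrix.mulVec_mulVec, ← Matrix.mulVec_mulVec]
    simp only [add_sub_cancel_left]
    rw [hmm]
    simp only [Matrix.mulVec_add, add_dotProduct, dotProduct_add, htr]
    have h1 : A.mulVec xs ⬝ᵥ D.mulVec (A.mulVec d)
        = A.mulVec d ⬝ᵥ D.mulVec (A.mulVec xs) := hsym _ _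
    have h2 : D.mulVec (A.mulVec xs) ⬝ᵥ A.mulVec d
        = A.mulVec d ⬝ᵥ D.mulVec (A.mulVec xs) := dotProduct_comm _ _
    rw [h1, h2]
    ring
  constructor
  · -- Wardrop ⇒ global min
    intro h x hx_nn hx_s
    obtain ⟨r₀, hr₀⟩ : ∃ r₀, 0 < xs r₀ := by
      by_contra hc
      push_neg at hc
      have : ∑ r, xs r = 0 := Finset.sum_eq_zero fun r _ =>
        le_antisymm (hc r) (hx_nonneg r)
      linarith [hx_sum, this]
    set g := cvec xs with hg
    set c := g r₀ with hc
    have hcle : ∀ r', c ≤ g r' := fun r' => h r₀ r' hr₀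
    have hgxs : g ⬝ᵥ xs = c := by
      have : ∀ r ∈ Finset.univ, g r * xs r = c * xs r := by
        intro r _
        rcases lt_or_eq_of_le (hx_nonneg r) with hpos | hzero
        · have h1 : g r ≤ c := h r r₀ hpos
          have h2 : c ≤ g r := hcle r
          rw [le_antisymm h1 h2]
        · rw [← hzero]; ring
      rw [dotProduct, Finset.sum_congr rfl this, ← Finset.mul_sum, hx_sum, mul_one]
    have hgx : c ≤ g ⬝ᵥ x := by
      calc c = c * ∑ r, x r := by rw [hx_s, mul_one]
        _ = ∑ r, c * x r := by rw [Finset.mul_sum]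
        _ ≤ ∑ r, g r * x r :=
          Finset.sum_le_sum fun r _ => mul_le_mul_of_nonneg_right (hcle r) (hx_nn r)
        _ = g ⬝ᵥ x := rfl
    have hlin : 0 ≤ g ⬝ᵥ (x - xs) := by
      have : g ⬝ᵥ (x - xs) = g ⬝ᵥ x - g ⬝ᵥ xs := by
        simp [dotProduct, mul_sub, Finset.sum_sub_distrib]
      rw [this, hgxs]; linarith
    have := hpsd (A.mulVec (x - xs))
    rw [key x]
    linarith
  · -- global min ⇒ Wardrop
    intro hmin r r' hr
    by_contra hcon
    push_neg at hcon
    rcases eq_or_ne r r' with rfl | hne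
    · exact absurd le_rfl (not_le_of_gt hcon)
    set g := cvec xs with hg
    set ε := g r - g r' with hε
    have hεpos : 0 < ε := by simp only [hε]; linarith
    set d₀ : Fin n → ℝ := fun j => (if j = r' then (1:ℝ) else 0) - (if j = r then 1 else 0)
      with hd₀
    set Q := (A.mulVec d₀) ⬝ᵥ D.mulVec (A.mulVec d₀) with hQdef
    have hQ : 0 ≤ Q := hpsd _
    set t := min (xs r) (ε / (2 * (Q + 1))) with ht
    have htpos : 0 < t := lt_min hr (by positivity)
    have htle : t ≤ xs r := min_le_left _ _
    have htle2 : t ≤ ε / (2 * (Q + 1)) := min_le_right _ _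
    set x : Fin n → ℝ := fun j => xs j + t * d₀ j with hxdef
    have hx_nn : ∀ j, 0 ≤ x j := by
      intro j
      simp only [hxdef, hd₀]
      rcases eq_or_ne j r with rfl | hjr
      · simp [hne.symm, if_neg]
        have : (if j = r' then (1:ℝ) else 0) = 0 := if_neg hne
        rw [this]
        linarith
      · rcases eq_or_ne j r' with rfl | hjr'
        · rw [if_pos rfl, if_neg hjr]
          nlinarith [hx_nonneg j]
        · rw [if_neg hjr', if_neg hjr]
          simpa using hx_nonneg j
    have hx_s : ∑ j, x j = 1 := by
      simp only [hxdef, hd₀]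
      rw [Finset.sum_add_distrib, hx_sum]
      have : ∑ j, t * ((if j = r' then (1:ℝ) else 0) - (if j = r then 1 else 0)) = 0 := by
        simp [mul_sub, Finset.sum_sub_distrib, mul_ite, mul_one, mul_zero, Finset.sum_ite_eq']
      rw [this, add_zero]
    have hΦ := hmin x hx_nn hx_s
    have hdiff : x - xs = t • d₀ := by
      funext j; simp [hxdef, mul_comm]
    have hgd₀ : g ⬝ᵥ d₀ = g r' - g r := by
      simp only [dotProduct, hd₀, mul_sub, Finset.sum_sub_distrib, mul_ite, mul_one,
        mul_zero, Finset.sum_ite_eq', Finset.mem_univ, if_pos]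
    have hlin : g ⬝ᵥ (x - xs) = t * (g r' - g r) := by
      rw [hdiff, dotProduct_smul, smul_eq_mul, hgd₀]
    have hquad : (A.mulVec (x - xs)) ⬝ᵥ D.mulVec (A.mulVec (x - xs)) = t * t * Q := by
      rw [hdiff, Matrix.mulVec_smul, Matrix.mulVec_smul, smul_dotProduct,
        dotProduct_smul, smul_eq_mul, smul_eq_mul, hQdef]
      ring
    rw [key x, hlin, hquad] at hΦ
    have hεt : g r' - g r = -ε := by simp only [hε]; ring
    rw [hεt] at hΦ
    -- 0 ≤ t * (-ε) + t * t * Q, with t ≤ ε / (2(Q+1))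
    have h2Q : 0 < 2 * (Q + 1) := by linarith
    have htQ : t * Q < ε := by
      have : t * (2 * (Q + 1)) ≤ ε := by
        calc t * (2 * (Q + 1)) ≤ ε / (2 * (Q + 1)) * (2 * (Q + 1)) := by
              apply mul_le_mul_of_nonneg_right (min_le_right _ _) (le_of_lt h2Q)
        _ = ε := by field_simp
      nlinarith
    nlinarith [mul_pos htpos hεpos, mul_lt_mul_of_pos_left htQ htpos]
end
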